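/- arXiv:quant-ph/0610003 — 4 statements merged into one kernel-verified Lean document; each statement's English description precedes it below -/
import Mathlib

section
/- For self-adjoint operators A and B on a finite-dimensional Hilbert space, and any operator P with 0 ≤ P ≤ I, we have Tr[P(A−B)] ≤ Tr[{A ≥ B}(A−B)], where {A ≥ B} denotes the orthogonal projection onto the nonnegative eigenspace of A−B. -/
open Matrix Kronecker BigOperators
open scoped ComplexOrder

/-- Projection onto the nonnegative eigenspace of a Hermitian matrix
(junk value `0` if the matrix is not Hermitian). -/
noncomputable def posProj {n : Type*} [Fintype n] [DecidableEq n]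
    (X : Matrix n n ℂ) : Matrix n n ℂ :=
  if hX : X.IsHermitian then
    (hX.eigenvectorUnitary : Matrix n n ℂ) *
      Matrix.diagonal (fun i => if (0:ℝ) ≤ hX.eigenvalues i then (1:ℂ) else 0) *
      star (hX.eigenvectorUnitary : Matrix n n ℂ)
  else 0

/-- Functional calculus logarithm of a Hermitian matrix, with the convention `log 0 = 0`
(junk value `0` if the matrix is not Hermitian). -/
noncomputable def matLog {n : Type*} [Fintype n] [DecidableEq n]
    (M : Matrix n n ℂ) : Matrix n n ℂ :=
  if hM : M.IsHermitian then
    (hM.eigenvectorUnitary : Matrix n n ℂ) *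
      Matrix.diagonal (fun i => (Real.log (hM.eigenvalues i) : ℂ)) *
      star (hM.eigenvectorUnitary : Matrix n n ℂ)
  else 0

/-- von Neumann entropy `-Tr[M log M] = -∑ λᵢ log λᵢ` (convention `0 log 0 = 0`). -/
noncomputable def vNEntropy {n : Type*} [Fintype n] [DecidableEq n]
    (M : Matrix n n ℂ) : ℝ :=
  if hM : M.IsHermitian then -∑ i, hM.eigenvalues i * Real.log (hM.eigenvalues i) else 0

/-- A density operator: positive semidefinite with unit trace. -/
def IsDensityOp {n : Type*} [Fintype n] [DecidableEq n] (ρ : Matrix n n ℂ) : Prop :=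
  ρ.PosSemidef ∧ ρ.trace = 1

/-- Partial trace over the first tensor factor. -/
noncomputable def traceA {a b : ℕ} (M : Matrix (Fin a × Fin b) (Fin a × Fin b) ℂ) :
    Matrix (Fin b) (Fin b) ℂ :=
  Matrix.of fun j j' => ∑ i, M (i, j) (i, j')

/-- Partial trace over the second tensor factor. -/
noncomputable def traceB {a b : ℕ} (M : Matrix (Fin a × Fin b) (Fin a × Fin b) ℂ) :
    Matrix (Fin a) (Fin a) ℂ :=
  Matrix.of fun i i' => ∑ j, M (i, j) (i', j)

/-- `n`-fold tensor (Kronecker) power of a matrix. -/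
noncomputable def tensorPow {d : ℕ} (ϑ : Matrix (Fin d) (Fin d) ℂ) (n : ℕ) :
    Matrix (Fin n → Fin d) (Fin n → Fin d) ℂ :=
  Matrix.of fun f g => ∏ i, ϑ (f i) (g i)

/-!
Diagonalise `X = A - B = U diag(λ) U*`. In that basis `Re Tr[Q X] = ∑ᵢ Re (U* Q U)ᵢᵢ λᵢ`, and for
`0 ≤ P ≤ 1` the diagonal entries of `U* P U` lie in `[0, 1]`, so `Re Tr[P X] ≤ ∑ᵢ max λᵢ 0`.
The projection `{X ≥ 0}` has diagonal entries `1` exactly where `λᵢ ≥ 0`, so it attains this bound.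
-/

theorem mul_le_max_zero {p x : ℝ} (hp0 : 0 ≤ p) (hp1 : p ≤ 1) : p * x ≤ max x 0 := by
  rcases le_total 0 x with hx | hx
  · rw [max_eq_left hx]
    exact mul_le_of_le_one_left hx hp1
  · rw [max_eq_right hx]
    exact mul_nonpos_of_nonneg_of_nonpos hp0 hx

namespace Matrix

theorem PosSemidef.re_diag_nonneg {n : Type*} {P : Matrix n n ℂ} (hP : P.PosSemidef) (i : n) :
    0 ≤ (P i i).re :=
  (Complex.nonneg_iff.mp hP.diag_nonneg).1

theorem PosSemidef.re_diag_le_one {n : Type*} [DecidableEq n] {P : Matrix n n ℂ}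
    (hP : (1 - P).PosSemidef) (i : n) : (P i i).re ≤ 1 := by
  have h := hP.re_diag_nonneg i
  simp only [sub_apply, one_apply_eq, Complex.sub_re, Complex.one_re] at h
  linarith

variable {n : Type*} [Fintype n] [DecidableEq n]

theorem PosSemidef.one_sub_star_mul_mul {P U : Matrix n n ℂ} (hP : (1 - P).PosSemidef)
    (hU : U ∈ unitaryGroup n ℂ) : (1 - star U * P * U).PosSemidef := by
  have h := hP.conjTranspose_mul_mul_same U
  rwa [← star_eq_conjTranspose, mul_sub, sub_mul, mul_one, (mem_unitaryGroup_iff').mp hU] at h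

namespace IsHermitian

variable {X : Matrix n n ℂ} (hX : X.IsHermitian)
include hX

theorem re_trace_mul_eq_sum (M : Matrix n n ℂ) :
    (M * X).trace.re =
      ∑ i, ((star (hX.eigenvectorUnitary : Matrix n n ℂ) * M * hX.eigenvectorUnitary) i i).re *
        hX.eigenvalues i := by
  conv_lhs => rw [hX.spectral_theorem, Unitary.conjStarAlgAut_apply, ← mul_assoc, ← mul_assoc,
    trace_mul_cycle, ← mul_assoc]
  simp [trace, mul_diagonal, Complex.re_sum]

theorem star_eigenvectorUnitary_mul_posProj_mul :
    star (hX.eigenvectorUnitary : Matrix n n ℂ) * posProj X *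
        (hX.eigenvectorUnitary : Matrix n n ℂ) =
      diagonal fun i => if 0 ≤ hX.eigenvalues i then 1 else 0 := by
  rw [posProj, dif_pos hX]
  simp only [← mul_assoc, Unitary.coe_star_mul_self, one_mul]
  rw [mul_assoc _ (star _), Unitary.coe_star_mul_self, mul_one]

theorem re_trace_posProj_mul_self :
    (posProj X * X).trace.re = ∑ i, max (hX.eigenvalues i) 0 := by
  rw [hX.re_trace_mul_eq_sum, hX.star_eigenvectorUnitary_mul_posProj_mul]
  refine Finset.sum_congr rfl fun i _ => ?_
  rw [diagonal_apply_eq]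
  split_ifs with h
  · simp [h]
  · simp [(not_le.mp h).le]

theorem re_trace_mul_le_sum_max_eigenvalues {P : Matrix n n ℂ} (hP0 : P.PosSemidef)
    (hP1 : (1 - P).PosSemidef) :
    (P * X).trace.re ≤ ∑ i, max (hX.eigenvalues i) 0 := by
  rw [hX.re_trace_mul_eq_sum]
  have hQ0 := hP0.conjTranspose_mul_mul_same (hX.eigenvectorUnitary : Matrix n n ℂ)
  rw [← star_eq_conjTranspose] at hQ0
  have hQ1 := hP1.one_sub_star_mul_mul hX.eigenvectorUnitary.2
  refine Finset.sum_le_sum fun i _ => ?_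
  exact mul_le_max_zero (hQ0.re_diag_nonneg i) (PosSemidef.re_diag_le_one hQ1 i)

end IsHermitian

end Matrix

theorem projection_trace_inequality {d : ℕ} (A B P : Matrix (Fin d) (Fin d) ℂ)
    (hA : A.IsHermitian) (hB : B.IsHermitian)
    (hP0 : P.PosSemidef) (hP1 : (1 - P).PosSemidef) :
    ((P * (A - B)).trace).re ≤ ((posProj (A - B) * (A - B)).trace).re := by
  have hX : (A - B).IsHermitian := hA.sub hB
  rw [hX.re_trace_posProj_mul_self]
  exact hX.re_trace_mul_le_sum_max_eigenvalues hP0 hP1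
end

section
/- Let ρ = t σ + (1−t) ω be a convex combination of density operators with t ∈ (0,1), and let c > 0. Then Tr[{ρ ≥ cI}(ρ − cI)] ≤ t·Tr[{σ ≥ cI}(σ − cI)] + (1−t)·Tr[{ω ≥ cI}(ω − cI)]. -/
open Matrix Kronecker BigOperators
open scoped ComplexOrder

/-!
`X ↦ Tr[{X ≥ 0} X]` is the maximum of the linear functionals `X ↦ Tr[P X]` over `0 ≤ P ≤ 1`,
attained at `P = {X ≥ 0}`; hence it is positively homogeneous and subadditive. Apply this to
`ρ - cI = t (σ - cI) + (1 - t) (ω - cI)`. The order facts about `{X ≥ 0}` come from writing it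
as the continuous functional calculus of the indicator of `[0, ∞)`.
-/

open scoped MatrixOrder

section
variable {n : Type*} [Fintype n] [DecidableEq n]

lemma posProj_eq_cfc {X : Matrix n n ℂ} (hX : X.IsHermitian) :
    posProj X = cfc (fun x : ℝ => if 0 ≤ x then 1 else 0) X := by
  rw [hX.cfc_eq, IsHermitian.cfc, posProj, dif_pos hX, Unitary.conjStarAlgAut_apply]
  congr 3
  ext i
  by_cases h : 0 ≤ hX.eigenvalues i <;> simp [h]

lemma posProj_mul_self_eq_cfc {X : Matrix n n ℂ} (hX : X.IsHermitian) :
    posProj X * X = cfc (fun x : ℝ => max x 0) X := by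
  have hfin := X.finite_real_spectrum
  rw [posProj_eq_cfc hX]
  conv_lhs => enter [2]; rw [← cfc_id' ℝ X hX.isSelfAdjoint]
  rw [← cfc_mul _ _ X (hfin.continuousOn _) (hfin.continuousOn _)]
  congr 1
  ext x
  by_cases h : 0 ≤ x
  · simp [h]
  · simp [h, (not_le.mp h).le]

lemma posProj_nonneg {X : Matrix n n ℂ} (hX : X.IsHermitian) : 0 ≤ posProj X := by
  rw [posProj_eq_cfc hX]
  exact cfc_nonneg fun x _ => by positivity

lemma posProj_le_one {X : Matrix n n ℂ} (hX : X.IsHermitian) : posProj X ≤ 1 := by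
  rw [posProj_eq_cfc hX]
  exact cfc_le_one _ _ fun x _ => by split_ifs <;> norm_num

lemma posProj_mul_self_nonneg {X : Matrix n n ℂ} (hX : X.IsHermitian) : 0 ≤ posProj X * X := by
  rw [posProj_mul_self_eq_cfc hX]
  exact cfc_nonneg fun x _ => le_max_right x 0

lemma le_posProj_mul_self {X : Matrix n n ℂ} (hX : X.IsHermitian) : X ≤ posProj X * X := by
  rw [posProj_mul_self_eq_cfc hX]
  conv_lhs => rw [← cfc_id' ℝ X hX.isSelfAdjoint]
  exact cfc_mono fun x _ => le_max_left x 0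

lemma re_trace_mul_nonneg {A B : Matrix n n ℂ} (hA : 0 ≤ A) (hB : 0 ≤ B) :
    0 ≤ (A * B).trace.re := by
  obtain ⟨C, rfl⟩ := CStarAlgebra.nonneg_iff_eq_star_mul_self.mp hA
  rw [Matrix.mul_assoc, Matrix.trace_mul_comm, Matrix.star_eq_conjTranspose]
  exact (Complex.nonneg_iff.mp (hB.posSemidef.mul_mul_conjTranspose_same C).trace_nonneg).1

/-- `Tr[{X ≥ 0} X] - Tr[P X] = Tr[P ({X ≥ 0} X - X)] + Tr[(1 - P) {X ≥ 0} X]`, and both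
terms are traces of products of positive matrices. -/
lemma re_trace_mul_le_re_trace_posProj_mul_self {X P : Matrix n n ℂ} (hX : X.IsHermitian)
    (hP0 : 0 ≤ P) (hP1 : P ≤ 1) :
    (P * X).trace.re ≤ (posProj X * X).trace.re := by
  have hneg := re_trace_mul_nonneg hP0 (sub_nonneg.mpr (le_posProj_mul_self hX))
  have hpos := re_trace_mul_nonneg (sub_nonneg.mpr hP1) (posProj_mul_self_nonneg hX)
  rw [Matrix.mul_sub, trace_sub, Complex.sub_re] at hneg
  rw [Matrix.sub_mul, Matrix.one_mul, trace_sub, Complex.sub_re] at hpos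
  linarith

lemma re_trace_posProj_mul_self_smul_add_le {A B : Matrix n n ℂ} (hA : A.IsHermitian)
    (hB : B.IsHermitian) {a b : ℝ} (ha : 0 ≤ a) (hb : 0 ≤ b) :
    (posProj ((a : ℂ) • A + (b : ℂ) • B) * ((a : ℂ) • A + (b : ℂ) • B)).trace.re
      ≤ a * (posProj A * A).trace.re + b * (posProj B * B).trace.re := by
  have hX : ((a : ℂ) • A + (b : ℂ) • B).IsHermitian :=
    (hA.smul (Complex.conj_ofReal a)).add (hB.smul (Complex.conj_ofReal b))
  set P := posProj ((a : ℂ) • A + (b : ℂ) • B)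
  have hP0 := posProj_nonneg hX
  have hP1 := posProj_le_one hX
  calc (P * ((a : ℂ) • A + (b : ℂ) • B)).trace.re
      = a * (P * A).trace.re + b * (P * B).trace.re := by
        simp only [Matrix.mul_add, Matrix.mul_smul, trace_add, trace_smul, Complex.add_re,
          smul_eq_mul, Complex.re_ofReal_mul]
    _ ≤ a * (posProj A * A).trace.re + b * (posProj B * B).trace.re := by
        have hPA := re_trace_mul_le_re_trace_posProj_mul_self hA hP0 hP1
        have hPB := re_trace_mul_le_re_trace_posProj_mul_self hB hP0 hP1
        gcongr

end

theorem mixed_source_upper_bound_general {d : ℕ} (σ ω ρ : Matrix (Fin d) (Fin d) ℂ)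
    (hσ : IsDensityOp σ) (hω : IsDensityOp ω)
    (t c : ℝ) (ht0 : 0 < t) (ht1 : t < 1)
    (hρ : ρ = (t : ℂ) • σ + (((1 - t) : ℝ) : ℂ) • ω) :
    ((posProj (ρ - (c:ℂ) • 1) * (ρ - (c:ℂ) • 1)).trace).re
      ≤ t * ((posProj (σ - (c:ℂ) • 1) * (σ - (c:ℂ) • 1)).trace).re
        + (1 - t) * ((posProj (ω - (c:ℂ) • 1) * (ω - (c:ℂ) • 1)).trace).re := by
  have hshift : ρ - (c:ℂ) • 1 = (t:ℂ) • (σ - (c:ℂ) • 1) + (((1 - t):ℝ):ℂ) • (ω - (c:ℂ) • 1) := by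
    rw [hρ, smul_sub, smul_sub, sub_add_sub_comm, ← add_smul]
    push_cast
    rw [add_sub_cancel, one_smul]
  have hscalar : ((c:ℂ) • (1 : Matrix (Fin d) (Fin d) ℂ)).IsHermitian :=
    isHermitian_one.smul (Complex.conj_ofReal c)
  rw [hshift]
  exact re_trace_posProj_mul_self_smul_add_le (hσ.1.1.sub hscalar) (hω.1.1.sub hscalar)
    ht0.le (sub_nonneg.mpr ht1.le)

theorem mixed_source_upper_bound {d : ℕ} (σ ω ρ : Matrix (Fin d) (Fin d) ℂ)
    (hσ : IsDensityOp σ) (hω : IsDensityOp ω)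
    (t c : ℝ) (ht0 : 0 < t) (ht1 : t < 1) (hc : 0 < c)
    (hρ : ρ = (t : ℂ) • σ + (((1 - t) : ℝ) : ℂ) • ω) :
    ((posProj (ρ - (c:ℂ) • 1) * (ρ - (c:ℂ) • 1)).trace).re
      ≤ t * ((posProj (σ - (c:ℂ) • 1) * (σ - (c:ℂ) • 1)).trace).re
        + (1 - t) * ((posProj (ω - (c:ℂ) • 1) * (ω - (c:ℂ) • 1)).trace).re :=
  mixed_source_upper_bound_general σ ω ρ hσ hω t c ht0 ht1 hρ
end

section
/- Let ρ^{AB} be a density operator on C^d ⊗ H_B with marginal ρ^B, and consider any dense-coding code consisting of M states ρ_i^{AB} = (E_i ⊗ id)ρ^{AB} (with E_i CPTP on A) and a POVM {F_i}_{i=1}^M on AB (F_i ≥ 0, Σ F_i ≤ I). Then the average success probability satisfies (1/M) Σ_i Tr[F_i ρ_i^{AB}] ≤ max_i Tr[{ρ_i^{AB} ≥ e^{−γ} I_A ⊗ ρ^B}(ρ_i^{AB} − e^{−γ} I_A ⊗ ρ^B)] + (d·e^{−γ})/M · d^{0}, i.e., ≤ max_i Tr[Π_i(γ)] + e^{(log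 d − γ)}/M, where Π_i(γ) = {ρ_i^{AB} ≥ e^{−γ} I_A ⊗ ρ^B}(ρ_i^{AB} − e^{−γ} I_A ⊗ ρ^B). -/
open Matrix Kronecker BigOperators
open scoped ComplexOrder

/-! Write ρᵢ = Xᵢ + e^{-γ} σ with σ = I_A ⊗ ρ^B and Xᵢ = ρᵢ - e^{-γ} σ. In an eigenbasis of Xᵢ,
Tr[Fᵢ Xᵢ] = Σₖ gₖ λₖ with gₖ ∈ [0, 1] because 0 ≤ Fᵢ ≤ I, so Tr[Fᵢ Xᵢ] ≤ Σₖ max(λₖ, 0) =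
Tr[{Xᵢ ≥ 0} Xᵢ], which is at most the maximum over i. Because Σᵢ Fᵢ ≤ I, the remaining terms add
up to at most e^{-γ} Tr σ = e^{-γ} d. -/

open scoped MatrixOrder

namespace Matrix

variable {n : Type*} [DecidableEq n]

lemma re_diag_mem_Icc {G : Matrix n n ℂ} (hG₀ : 0 ≤ G) (hG₁ : G ≤ 1) (k : n) :
    (G k k).re ∈ Set.Icc 0 1 := by
  have h₀ := (Complex.nonneg_iff.mp (hG₀.posSemidef.diag_nonneg (i := k))).1
  have h₁ := (Complex.nonneg_iff.mp ((le_iff.mp hG₁).diag_nonneg (i := k))).1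
  rw [sub_apply, one_apply_eq, Complex.sub_re, Complex.one_re] at h₁
  exact ⟨h₀, by linarith⟩

variable [Fintype n]

lemma PosSemidef.trace_mul_nonneg {A B : Matrix n n ℂ} (hA : A.PosSemidef) (hB : B.PosSemidef) :
    0 ≤ (A * B).trace := by
  obtain ⟨S, rfl⟩ := CStarAlgebra.nonneg_iff_eq_star_mul_self.mp hA.nonneg
  rw [Matrix.mul_assoc, trace_mul_comm, Matrix.mul_assoc, ← Matrix.mul_assoc]
  exact (hB.mul_mul_conjTranspose_same S).trace_nonneg

lemma re_trace_mul_le_re_trace {F σ : Matrix n n ℂ} (hF : F ≤ 1) (hσ : σ.PosSemidef) :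
    (F * σ).trace.re ≤ σ.trace.re := by
  have := (Complex.nonneg_iff.mp ((le_iff.mp hF).trace_mul_nonneg hσ)).1
  simpa [Matrix.sub_mul, trace_sub] using this

variable {X : Matrix n n ℂ}

lemma IsHermitian.trace_mul_eq_sum (hX : X.IsHermitian) (F : Matrix n n ℂ) :
    (F * X).trace = ∑ k, (star (hX.eigenvectorUnitary : Matrix n n ℂ) * F *
      hX.eigenvectorUnitary) k k * hX.eigenvalues k := by
  conv_lhs => rw [hX.spectral_theorem, Unitary.conjStarAlgAut_apply]
  rw [← Matrix.mul_assoc, ← Matrix.mul_assoc, trace_mul_comm]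
  simp only [← Matrix.mul_assoc]
  simp [trace, mul_diagonal]

lemma IsHermitian.star_mul_posProj_mul (hX : X.IsHermitian) :
    star (hX.eigenvectorUnitary : Matrix n n ℂ) * posProj X *
        (hX.eigenvectorUnitary : Matrix n n ℂ) =
      diagonal fun k => if 0 ≤ hX.eigenvalues k then 1 else 0 := by
  have hU := Unitary.star_mul_self_of_mem hX.eigenvectorUnitary.2
  rw [posProj, dif_pos hX, ← Matrix.mul_assoc, ← Matrix.mul_assoc, hU, Matrix.one_mul,
    Matrix.mul_assoc, hU, Matrix.mul_one]

lemma IsHermitian.re_trace_posProj_mul (hX : X.IsHermitian) :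
    (posProj X * X).trace.re = ∑ k, max (hX.eigenvalues k) 0 := by
  rw [hX.trace_mul_eq_sum, hX.star_mul_posProj_mul, Complex.re_sum]
  refine Finset.sum_congr rfl fun k _ => ?_
  rw [diagonal_apply_eq]
  split_ifs with h <;> simp [h, le_of_not_ge]

lemma IsHermitian.re_trace_mul_le_re_trace_posProj_mul (hX : X.IsHermitian) {F : Matrix n n ℂ}
    (hF₀ : 0 ≤ F) (hF₁ : F ≤ 1) : (F * X).trace.re ≤ (posProj X * X).trace.re := by
  set U : Matrix n n ℂ := (hX.eigenvectorUnitary : Matrix n n ℂ)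
  have hG₀ : 0 ≤ star U * F * U := star_left_conjugate_nonneg hF₀ U
  have hG₁ : star U * F * U ≤ 1 := by
    simpa [U, Unitary.star_mul_self_of_mem hX.eigenvectorUnitary.2] using
      star_left_conjugate_le_conjugate hF₁ U
  rw [hX.re_trace_posProj_mul, hX.trace_mul_eq_sum, Complex.re_sum]
  refine Finset.sum_le_sum fun k _ => ?_
  obtain ⟨hg₀, hg₁⟩ := re_diag_mem_Icc hG₀ hG₁ k
  simp only [Complex.mul_re, Complex.ofReal_re, Complex.ofReal_im, mul_zero, sub_zero]
  rcases le_total 0 (hX.eigenvalues k) with h | h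
  · rw [max_eq_left h]; nlinarith
  · rw [max_eq_right h]; nlinarith

lemma sum_re_trace_mul_le_sum_re_trace_posProj_mul_add {ι : Type*} [Fintype ι]
    {F ρ : ι → Matrix n n ℂ} {σ : Matrix n n ℂ} {c : ℝ} (hF : ∀ i, 0 ≤ F i)
    (hFsum : ∑ i, F i ≤ 1) (hρ : ∀ i, (ρ i).IsHermitian) (hσ : σ.PosSemidef) (hc : 0 ≤ c) :
    ∑ i, (F i * ρ i).trace.re ≤
      ∑ i, (posProj (ρ i - (c : ℂ) • σ) * (ρ i - (c : ℂ) • σ)).trace.re + c * σ.trace.re := by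
  have hX : ∀ i, (ρ i - (c : ℂ) • σ).IsHermitian := fun i =>
    (hρ i).sub (hσ.isHermitian.smul (Complex.conj_ofReal c))
  have hF₁ : ∀ i, F i ≤ 1 := fun i =>
    (Finset.single_le_sum (fun j _ => hF j) (Finset.mem_univ i)).trans hFsum
  have hsplit : ∀ i, (F i * ρ i).trace.re =
      (F i * (ρ i - (c : ℂ) • σ)).trace.re + c * (F i * σ).trace.re := by
    intro i
    simp [Matrix.mul_sub, trace_sub]
  have hσpart : ∑ i, (F i * σ).trace.re ≤ σ.trace.re := by
    simpa [Finset.sum_mul, trace_sum, Complex.re_sum] using re_trace_mul_le_re_trace hFsum hσ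
  calc ∑ i, (F i * ρ i).trace.re
      = ∑ i, (F i * (ρ i - (c : ℂ) • σ)).trace.re + c * ∑ i, (F i * σ).trace.re := by
        simp_rw [hsplit, Finset.sum_add_distrib, Finset.mul_sum]
    _ ≤ _ := add_le_add
        (Finset.sum_le_sum fun i _ => (hX i).re_trace_mul_le_re_trace_posProj_mul (hF i) (hF₁ i))
        (mul_le_mul_of_nonneg_left hσpart hc)

end Matrix

section PartialTrace
variable {a b : ℕ} {M : Matrix (Fin a × Fin b) (Fin a × Fin b) ℂ}

lemma traceA_eq_sum_submatrix :
    traceA M = ∑ i, M.submatrix (Prod.mk i) (Prod.mk i) := by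
  ext j j'
  simp [traceA, Matrix.sum_apply]

lemma traceA_posSemidef (hM : M.PosSemidef) : (traceA M).PosSemidef :=
  traceA_eq_sum_submatrix ▸ Matrix.posSemidef_sum _ fun _ _ => hM.submatrix _

lemma trace_traceA : (traceA M).trace = M.trace := by
  simp only [Matrix.trace, traceA, Matrix.diag, Matrix.of_apply, Fintype.sum_prod_type]
  exact Finset.sum_comm

end PartialTrace

theorem dense_coding_success_bound_general {d b : ℕ} (hd : 0 < d)
    (ρAB : Matrix (Fin d × Fin b) (Fin d × Fin b) ℂ) (hρ : IsDensityOp ρAB)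
    (ρB : Matrix (Fin b) (Fin b) ℂ) (hρB : ρB = traceA ρAB)
    (M : ℕ) (hM : 0 < M) (m : ℕ)
    (K : Fin M → Fin m → Matrix (Fin d) (Fin d) ℂ)
    (ρi : Fin M → Matrix (Fin d × Fin b) (Fin d × Fin b) ℂ)
    (hρi : ∀ i, ρi i = ∑ k,
        ((K i k) ⊗ₖ (1 : Matrix (Fin b) (Fin b) ℂ)) * ρAB * ((K i k) ⊗ₖ (1 : Matrix (Fin b) (Fin b) ℂ))ᴴ)
    (F : Fin M → Matrix (Fin d × Fin b) (Fin d × Fin b) ℂ)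
    (hF : ∀ i, (F i).PosSemidef) (hFsum : ((1 : Matrix (Fin d × Fin b) (Fin d × Fin b) ℂ) - ∑ i, F i).PosSemidef)
    (γ : ℝ) :
    (M : ℝ)⁻¹ * ∑ i, ((F i * ρi i).trace).re
      ≤ Finset.univ.sup' ⟨⟨0, hM⟩, Finset.mem_univ _⟩
          (fun i => ((posProj (ρi i - (Real.exp (-γ) : ℂ) • ((1 : Matrix (Fin d) (Fin d) ℂ) ⊗ₖ ρB))
            * (ρi i - (Real.exp (-γ) : ℂ) • ((1 : Matrix (Fin d) (Fin d) ℂ) ⊗ₖ ρB))).trace).re)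
        + Real.exp (Real.log d - γ) / M := by
  set σ := (1 : Matrix (Fin d) (Fin d) ℂ) ⊗ₖ ρB
  have hσ : σ.PosSemidef := PosSemidef.one.kronecker (hρB ▸ traceA_posSemidef hρ.1)
  have hσ_trace : σ.trace.re = d := by
    simp [σ, trace_kronecker, hρB, trace_traceA, hρ.2]
  have hρi_herm : ∀ i, (ρi i).IsHermitian := fun i => hρi i ▸
    (posSemidef_sum _ fun _ _ => hρ.1.mul_mul_conjTranspose_same _).isHermitian
  have hbound := sum_re_trace_mul_le_sum_re_trace_posProj_mul_add (fun i => (hF i).nonneg)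
    hFsum hρi_herm hσ (Real.exp_nonneg (-γ))
  set P : Fin M → ℝ := fun i => (posProj (ρi i - (Real.exp (-γ) : ℂ) • σ) *
    (ρi i - (Real.exp (-γ) : ℂ) • σ)).trace.re
  have hsup : ∑ i, P i ≤ M * Finset.univ.sup' ⟨⟨0, hM⟩, Finset.mem_univ _⟩ P := by
    simpa using Finset.sum_le_card_nsmul Finset.univ P _ fun _ hi => Finset.le_sup' P hi
  have hexp : Real.exp (Real.log d - γ) = Real.exp (-γ) * d := by
    rw [sub_eq_neg_add, Real.exp_add, Real.exp_log (by exact_mod_cast hd)]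
  rw [hσ_trace, ← hexp] at hbound
  have hM' : (0 : ℝ) < M := by exact_mod_cast hM
  rw [inv_mul_le_iff₀ hM', mul_add, mul_div_cancel₀ _ hM'.ne']
  linarith

theorem dense_coding_success_bound {d b : ℕ} (hd : 0 < d)
    (ρAB : Matrix (Fin d × Fin b) (Fin d × Fin b) ℂ) (hρ : IsDensityOp ρAB)
    (ρB : Matrix (Fin b) (Fin b) ℂ) (hρB : ρB = traceA ρAB)
    (M : ℕ) (hM : 0 < M) (m : ℕ)
    (K : Fin M → Fin m → Matrix (Fin d) (Fin d) ℂ)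
    (hK : ∀ i, ∑ k, (K i k)ᴴ * K i k = 1)
    (ρi : Fin M → Matrix (Fin d × Fin b) (Fin d × Fin b) ℂ)
    (hρi : ∀ i, ρi i = ∑ k,
        ((K i k) ⊗ₖ (1 : Matrix (Fin b) (Fin b) ℂ)) * ρAB * ((K i k) ⊗ₖ (1 : Matrix (Fin b) (Fin b) ℂ))ᴴ)
    (F : Fin M → Matrix (Fin d × Fin b) (Fin d × Fin b) ℂ)
    (hF : ∀ i, (F i).PosSemidef) (hFsum : ((1 : Matrix (Fin d × Fin b) (Fin d × Fin b) ℂ) - ∑ i, F i).PosSemidef)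
    (γ : ℝ) :
    (M : ℝ)⁻¹ * ∑ i, ((F i * ρi i).trace).re
      ≤ Finset.univ.sup' ⟨⟨0, hM⟩, Finset.mem_univ _⟩
          (fun i => ((posProj (ρi i - (Real.exp (-γ) : ℂ) • ((1 : Matrix (Fin d) (Fin d) ℂ) ⊗ₖ ρB))
            * (ρi i - (Real.exp (-γ) : ℂ) • ((1 : Matrix (Fin d) (Fin d) ℂ) ⊗ₖ ρB))).trace).re)
        + Real.exp (Real.log d - γ) / M :=
  dense_coding_success_bound_general hd ρAB hρ ρB hρB M hM m K ρi hρi F hF hFsum γ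
end

section
/- For a sequence of density operators ρ_n = ϑ^{⊗n} and σ_n = ς^{⊗n} (i.i.d. states) with supp ϑ ⊆ supp ς, for every δ > 0 the probability weight Tr[{ϑ^{⊗n} ≥ e^{n(D(ϑ‖ς)−δ)} ς^{⊗n}} (ϑ^{⊗n} − e^{n(D(ϑ‖ς)−δ)} ς^{⊗n})] → 1 as n → ∞, where D(ϑ‖ς) = Tr[ϑ(log ϑ − log ς)] is the quantum relative entropy; i.e., the spectral inf-divergence rate of an i.i.d. sequence equals the relative entropy. -/
set_option linter.unusedSectionVars false

open Matrix Kronecker BigOperators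
open scoped ComplexOrder

open Matrix BigOperators Finset

namespace Stein

variable {m : Type*} [Fintype m] [DecidableEq m]

noncomputable def outerM (a b : m → ℂ) : Matrix m m ℂ :=
  Matrix.of fun x y => a x * (starRingEnd ℂ) (b y)

noncomputable def dotc (a b : m → ℂ) : ℂ := ∑ x, (starRingEnd ℂ) (a x) * b x

lemma outerM_apply (a b : m → ℂ) (x y : m) :
    outerM a b x y = a x * (starRingEnd ℂ) (b y) := rfl

lemma outerM_mul_outerM (a b c e : m → ℂ) :
    outerM a b * outerM c e = dotc b c • outerM a e := by
  ext x y
  simp only [Matrix.mul_apply, outerM_apply, Matrix.smul_apply, smul_eq_mul, dotc,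
    Finset.sum_mul]
  exact Finset.sum_congr rfl fun z _ => by ring

lemma trace_outerM (a b : m → ℂ) : (outerM a b).trace = dotc b a := by
  simp only [Matrix.trace, Matrix.diag, dotc, outerM_apply]
  exact Finset.sum_congr rfl fun z _ => by ring

lemma conjTranspose_outerM (a b : m → ℂ) : (outerM a b)ᴴ = outerM b a := by
  ext x y
  simp only [Matrix.conjTranspose_apply, outerM_apply, star_mul', RCLike.star_def,
    Complex.conj_conj]
  exact mul_comm _ _

lemma trace_outerM_mul (a b : m → ℂ) (N : Matrix m m ℂ) :
    (outerM a b * N).trace = dotc b (N *ᵥ a) := by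
  simp only [Matrix.trace, Matrix.diag, Matrix.mul_apply, outerM_apply, dotc, Matrix.mulVec,
    dotProduct]
  rw [Finset.sum_comm]
  refine Finset.sum_congr rfl fun z _ => ?_
  rw [Finset.mul_sum]
  exact Finset.sum_congr rfl fun x _ => by ring

lemma cnonneg_iff {z : ℂ} : 0 ≤ z ↔ 0 ≤ z.re ∧ z.im = 0 := by
  rw [Complex.le_def]
  simp [eq_comm]

lemma eq_re_of_nonneg {z : ℂ} (h : 0 ≤ z) : z = (z.re : ℂ) := by
  obtain ⟨h1, h2⟩ := cnonneg_iff.mp h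
  exact Complex.ext rfl (by simpa using h2)

lemma posSemidef_outerM_self (a : m → ℂ) : (outerM a a).PosSemidef := by
  refine Matrix.PosSemidef.of_dotProduct_mulVec_nonneg ?_ ?_
  · exact conjTranspose_outerM a a
  · intro x
    have h1 : (outerM a a) *ᵥ x = (dotc a x) • a := by
      ext z
      simp only [Matrix.mulVec, dotProduct, outerM_apply, Pi.smul_apply, smul_eq_mul, dotc,
        Finset.sum_mul]
      exact Finset.sum_congr rfl fun y _ => by ring
    have h2 : dotProduct (star x) ((outerM a a) *ᵥ x) = dotc a x * star (dotc a x) := by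
      rw [h1]
      have hstar : star (dotc a x) = ∑ y, a y * (starRingEnd ℂ) (x y) := by
        simp only [dotc, star_sum, star_mul', RCLike.star_def, Complex.conj_conj]
      rw [hstar, Finset.mul_sum]
      simp only [dotProduct, Pi.star_apply, Pi.smul_apply, smul_eq_mul, RCLike.star_def]
      exact Finset.sum_congr rfl fun y _ => by ring
    rw [h2]
    exact mul_star_self_nonneg _

lemma posSemidef_smul_real {M : Matrix m m ℂ} (hM : M.PosSemidef) {r : ℝ} (hr : 0 ≤ r) :
    ((r : ℂ) • M).PosSemidef := by
  refine Matrix.PosSemidef.of_dotProduct_mulVec_nonneg ?_ ?_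
  · show ((r : ℂ) • M)ᴴ = (r : ℂ) • M
    rw [Matrix.conjTranspose_smul, hM.1.eq, RCLike.star_def, Complex.conj_ofReal]
  · intro x
    rw [Matrix.smul_mulVec, dotProduct_smul]
    have h := hM.dotProduct_mulVec_nonneg x
    rw [eq_re_of_nonneg h]
    rw [smul_eq_mul, ← Complex.ofReal_mul]
    rw [cnonneg_iff]
    constructor
    · simp only [Complex.ofReal_re]
      exact mul_nonneg hr (cnonneg_iff.mp h).1
    · simp

lemma posSemidef_sum {ι : Type*} [DecidableEq ι] (s : Finset ι) (f : ι → Matrix m m ℂ)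
    (h : ∀ a ∈ s, (f a).PosSemidef) : (∑ a ∈ s, f a).PosSemidef := by
  induction s using Finset.induction_on with
  | empty => simpa using Matrix.PosSemidef.zero
  | insert _ _ hx ih =>
      rw [Finset.sum_insert hx]
      exact ((h _ (Finset.mem_insert_self _ _)).add
        (ih fun a ha => h a (Finset.mem_insert_of_mem ha)))

lemma diag_re_nonneg {M : Matrix m m ℂ} (hM : M.PosSemidef) (x : m) : 0 ≤ (M x x).re := by
  have h := hM.dotProduct_mulVec_nonneg (Pi.single x 1)
  have hd : dotProduct (star (Pi.single x 1)) (M *ᵥ (Pi.single x 1 : m → ℂ)) = M x x := by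
    simp [dotProduct, Matrix.mulVec, Pi.single_apply, apply_ite, mul_comm]
  rw [hd] at h
  exact (cnonneg_iff.mp h).1

lemma trace_re_nonneg {M : Matrix m m ℂ} (hM : M.PosSemidef) : 0 ≤ M.trace.re := by
  rw [Matrix.trace, Complex.re_sum]
  exact Finset.sum_nonneg fun x _ => diag_re_nonneg hM x

/-- Cauchy–Schwarz for the trace inner product. -/
lemma abs_trace_conjTranspose_mul_le (X Y : Matrix m m ℂ) :
    norm ((Xᴴ * Y).trace) ≤
      Real.sqrt ((Xᴴ * X).trace.re) * Real.sqrt ((Yᴴ * Y).trace.re) := by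
  have htr : ∀ Z W : Matrix m m ℂ, (Zᴴ * W).trace = ∑ ij : m × m,
      (starRingEnd ℂ) (Z ij.1 ij.2) * W ij.1 ij.2 := by
    intro Z W
    rw [Matrix.trace]
    have hdg : ∀ j, (Zᴴ * W).diag j = ∑ i, (starRingEnd ℂ) (Z i j) * W i j := by
      intro j
      simp [Matrix.diag, Matrix.mul_apply, Matrix.conjTranspose_apply, RCLike.star_def]
    simp_rw [hdg]
    rw [Fintype.sum_prod_type]
    exact Finset.sum_comm
  have hsq : ∀ Z : Matrix m m ℂ, (Zᴴ * Z).trace.re = ∑ ij : m × m, norm (Z ij.1 ij.2) ^ 2 := by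
    intro Z
    rw [htr, Complex.re_sum]
    refine Finset.sum_congr rfl fun ij _ => ?_
    rw [mul_comm, Complex.mul_conj]
    simp [Complex.sq_norm]
  rw [htr, hsq, hsq]
  set f : m × m → ℝ := fun ij => norm (X ij.1 ij.2) with hf
  set g : m × m → ℝ := fun ij => norm (Y ij.1 ij.2) with hg
  have h1 : norm (∑ ij : m × m, (starRingEnd ℂ) (X ij.1 ij.2) * Y ij.1 ij.2)
      ≤ ∑ ij : m × m, f ij * g ij := by
    refine le_trans (norm_sum_le _ _) ?_
    refine Finset.sum_le_sum fun ij _ => le_of_eq ?_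
    rw [norm_mul, Complex.norm_conj]
  refine h1.trans ?_
  have h2 := Finset.sum_mul_sq_le_sq_mul_sq Finset.univ f g
  have h0 : 0 ≤ ∑ ij : m × m, f ij * g ij :=
    Finset.sum_nonneg fun ij _ => mul_nonneg (norm_nonneg _) (norm_nonneg _)
  calc ∑ ij : m × m, f ij * g ij = Real.sqrt ((∑ ij : m × m, f ij * g ij) ^ 2) :=
        (Real.sqrt_sq h0).symm
    _ ≤ Real.sqrt ((∑ ij : m × m, f ij ^ 2) * ∑ ij : m × m, g ij ^ 2) := Real.sqrt_le_sqrt h2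
    _ = _ := Real.sqrt_mul (Finset.sum_nonneg fun ij _ => sq_nonneg _) _

section Fam

variable {ι : Type*} [Fintype ι] [DecidableEq ι]

noncomputable def fam (w : ι → m → ℂ) (c : ι → ℂ) : Matrix m m ℂ :=
  ∑ a, c a • outerM (w a) (w a)

variable {w : ι → m → ℂ}

lemma fam_mul_fam (hw : ∀ a b, dotc (w a) (w b) = if a = b then 1 else 0) (c c' : ι → ℂ) :
    fam w c * fam w c' = fam w (fun a => c a * c' a) := by
  have step : ∀ a, (c a • outerM (w a) (w a)) * fam w c'
      = (c a * c' a) • outerM (w a) (w a) := by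
    intro a
    unfold fam
    rw [Finset.mul_sum]
    have h : ∀ b, (c a • outerM (w a) (w a)) * (c' b • outerM (w b) (w b))
        = if a = b then (c a * c' b) • outerM (w a) (w b) else 0 := by
      intro b
      rw [smul_mul_assoc, mul_smul_comm, outerM_mul_outerM, hw a b, smul_smul, smul_smul]
      by_cases hab : a = b
      · simp [hab]
      · simp [hab]
    rw [Finset.sum_congr rfl fun b _ => h b, Finset.sum_ite_eq]
    simp
  unfold fam
  rw [Finset.sum_mul]
  exact Finset.sum_congr rfl fun a _ => step a

lemma fam_smul (r : ℂ) (c : ι → ℂ) : r • fam w c = fam w (fun a => r * c a) := by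
  unfold fam
  rw [Finset.smul_sum]
  exact Finset.sum_congr rfl fun a _ => by rw [smul_smul]

lemma fam_sub (c c' : ι → ℂ) : fam w c - fam w c' = fam w (fun a => c a - c' a) := by
  unfold fam
  rw [← Finset.sum_sub_distrib]
  exact Finset.sum_congr rfl fun a _ => by rw [sub_smul]

lemma fam_conjTranspose (c : ι → ℂ) : (fam w c)ᴴ = fam w (fun a => star (c a)) := by
  unfold fam
  rw [Matrix.conjTranspose_sum]
  exact Finset.sum_congr rfl fun a _ => by
    rw [Matrix.conjTranspose_smul, conjTranspose_outerM]

lemma fam_isHermitian (c : ι → ℝ) : (fam w fun a => (c a : ℂ)).IsHermitian := by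
  show _ = _
  rw [fam_conjTranspose]
  exact Finset.sum_congr rfl fun a _ => by
    simp only [RCLike.star_def, Complex.conj_ofReal]

lemma fam_posSemidef (c : ι → ℝ) (hc : ∀ a, 0 ≤ c a) :
    (fam w fun a => (c a : ℂ)).PosSemidef :=
  posSemidef_sum _ _ fun a _ => posSemidef_smul_real (posSemidef_outerM_self (w a)) (hc a)

lemma trace_fam (hw : ∀ a b, dotc (w a) (w b) = if a = b then 1 else 0) (c : ι → ℂ) :
    (fam w c).trace = ∑ a, c a := by
  unfold fam
  rw [Matrix.trace_sum]
  refine Finset.sum_congr rfl fun a _ => ?_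
  rw [Matrix.trace_smul, trace_outerM, hw a a, if_pos rfl, smul_eq_mul, mul_one]

lemma trace_fam_mul (c : ι → ℂ) (N : Matrix m m ℂ) :
    (fam w c * N).trace = ∑ a, c a * dotc (w a) (N *ᵥ w a) := by
  unfold fam
  rw [Finset.sum_mul, Matrix.trace_sum]
  refine Finset.sum_congr rfl fun a _ => ?_
  rw [smul_mul_assoc, Matrix.trace_smul, trace_outerM_mul, smul_eq_mul]

end Fam

section Tvec

noncomputable def tvec {d : ℕ} (u : Fin d → Fin d → ℂ) (n : ℕ) (I : Fin n → Fin d) :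
    (Fin n → Fin d) → ℂ :=
  fun x => ∏ i, u (I i) (x i)

lemma sum_prod_eq {d n : ℕ} {α : Type*} [CommSemiring α] (f : Fin n → Fin d → α) :
    ∑ x : Fin n → Fin d, ∏ i, f i (x i) = ∏ i, ∑ t, f i t :=
  (Fintype.prod_sum f).symm

lemma dotc_tvec_tvec {d n : ℕ} (u v : Fin d → Fin d → ℂ) (I J : Fin n → Fin d) :
    dotc (tvec u n I) (tvec v n J) = ∏ i, dotc (u (I i)) (v (J i)) := by
  unfold dotc tvec
  rw [← sum_prod_eq]
  refine Finset.sum_congr rfl fun x _ => ?_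
  rw [map_prod, ← Finset.prod_mul_distrib]

lemma tvec_orthonormal {d n : ℕ} {u : Fin d → Fin d → ℂ}
    (hu : ∀ k l, dotc (u k) (u l) = if k = l then 1 else 0) (I J : Fin n → Fin d) :
    dotc (tvec u n I) (tvec u n J) = if I = J then 1 else 0 := by
  rw [dotc_tvec_tvec]
  by_cases h : I = J
  · subst h
    simp [hu]
  · rw [if_neg h]
    obtain ⟨i, hi⟩ := Function.ne_iff.mp h
    refine Finset.prod_eq_zero (Finset.mem_univ i) ?_
    rw [hu, if_neg hi]

end Tvec

section TensorPow

lemma tensorPow_apply {d : ℕ} (M : Matrix (Fin d) (Fin d) ℂ) (n : ℕ) (x y : Fin n → Fin d) :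
    tensorPow M n x y = ∏ i, M (x i) (y i) := rfl

lemma tensorPow_eq_fam {d n : ℕ} (M : Matrix (Fin d) (Fin d) ℂ) (u : Fin d → Fin d → ℂ)
    (c : Fin d → ℝ)
    (hrep : ∀ x y, M x y = ∑ k, (c k : ℂ) * (u k x * (starRingEnd ℂ) (u k y))) :
    tensorPow M n = fam (tvec u n) (fun I => ((∏ i, c (I i) : ℝ) : ℂ)) := by
  ext x y
  rw [tensorPow_apply]
  rw [Finset.prod_congr rfl fun i (_ : i ∈ Finset.univ) => hrep (x i) (y i), ← sum_prod_eq]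
  unfold fam
  rw [Matrix.sum_apply]
  refine Finset.sum_congr rfl fun I _ => ?_
  rw [Matrix.smul_apply, outerM_apply, smul_eq_mul]
  show _ = ((∏ i, c (I i) : ℝ) : ℂ) * (tvec u n I x * (starRingEnd ℂ) (tvec u n I y))
  rw [Complex.ofReal_prod]
  unfold tvec
  rw [map_prod, ← Finset.prod_mul_distrib, ← Finset.prod_mul_distrib]

lemma tensorPow_mulVec_tvec {d n : ℕ} (M : Matrix (Fin d) (Fin d) ℂ) (v : Fin d → Fin d → ℂ)
    (J : Fin n → Fin d) :
    tensorPow M n *ᵥ tvec v n J = tvec (fun k => M *ᵥ v k) n J := by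
  funext x
  have h1 : (tensorPow M n *ᵥ tvec v n J) x
      = ∑ y : Fin n → Fin d, (∏ i, M (x i) (y i)) * ∏ i, v (J i) (y i) := by
    simp [Matrix.mulVec, dotProduct, tensorPow_apply, tvec]
  rw [h1]
  rw [Finset.sum_congr rfl fun y (_ : y ∈ Finset.univ) => (Finset.prod_mul_distrib).symm,
    sum_prod_eq (fun i t => M (x i) t * v (J i) t)]
  unfold tvec
  exact Finset.prod_congr rfl fun i _ => by simp [Matrix.mulVec, dotProduct]

lemma dotc_tvec_tensorPow {d n : ℕ} (M : Matrix (Fin d) (Fin d) ℂ) (v : Fin d → Fin d → ℂ)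
    (J : Fin n → Fin d) :
    dotc (tvec v n J) (tensorPow M n *ᵥ tvec v n J) = ∏ i, dotc (v (J i)) (M *ᵥ v (J i)) := by
  rw [tensorPow_mulVec_tvec, dotc_tvec_tvec]

end TensorPow

section PosProjFacts

lemma sandwich_mul {W P Q : Matrix m m ℂ} (hWW : star W * W = 1) :
    (W * P * star W) * (W * Q * star W) = W * (P * Q) * star W := by
  calc (W * P * star W) * (W * Q * star W)
      = W * (P * ((star W * W) * (Q * star W))) := by
        simp only [Matrix.mul_assoc]
    _ = W * (P * Q) * star W := by
        rw [hWW, Matrix.one_mul]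
        simp only [Matrix.mul_assoc]

lemma trace_sandwich {W P : Matrix m m ℂ} (hWW : star W * W = 1) :
    (W * P * star W).trace = P.trace := by
  rw [Matrix.trace_mul_cycle, hWW, Matrix.one_mul]

lemma posProj_mul_trace {X : Matrix m m ℂ} (hX : X.IsHermitian) :
    (posProj X * X).trace = ∑ i, if 0 ≤ hX.eigenvalues i then (hX.eigenvalues i : ℂ) else 0 := by
  have hWW : star (hX.eigenvectorUnitary : Matrix m m ℂ) * (hX.eigenvectorUnitary : Matrix m m ℂ)
      = 1 := Matrix.mem_unitaryGroup_iff'.mp hX.eigenvectorUnitary.2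
  have key : posProj X * X = (hX.eigenvectorUnitary : Matrix m m ℂ) *
      (Matrix.diagonal (fun i => (if (0:ℝ) ≤ hX.eigenvalues i then (1:ℂ) else 0)
        * (hX.eigenvalues i : ℂ))) * star (hX.eigenvectorUnitary : Matrix m m ℂ) := by
    have h2 : posProj X * X = posProj X * ((hX.eigenvectorUnitary : Matrix m m ℂ) *
        Matrix.diagonal (RCLike.ofReal ∘ hX.eigenvalues) *
        star (hX.eigenvectorUnitary : Matrix m m ℂ)) :=
      congrArg _ hX.spectral_theorem
    rw [h2, posProj, dif_pos hX, sandwich_mul hWW, Matrix.diagonal_mul_diagonal]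
    rfl
  rw [key, trace_sandwich hWW, Matrix.trace_diagonal]
  refine Finset.sum_congr rfl fun i _ => ?_
  by_cases h : (0:ℝ) ≤ hX.eigenvalues i <;> simp [h]

lemma posProj_isHermitian {X : Matrix m m ℂ} (hX : X.IsHermitian) :
    (posProj X)ᴴ = posProj X := by
  rw [posProj, dif_pos hX]
  have hD : (Matrix.diagonal (fun i => if (0:ℝ) ≤ hX.eigenvalues i then (1:ℂ) else 0))ᴴ
      = Matrix.diagonal (fun i => if (0:ℝ) ≤ hX.eigenvalues i then (1:ℂ) else 0) := by
    rw [Matrix.diagonal_conjTranspose]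
    have hfun : (star fun i => if (0:ℝ) ≤ hX.eigenvalues i then (1:ℂ) else 0)
        = fun i => if (0:ℝ) ≤ hX.eigenvalues i then (1:ℂ) else 0 := by
      funext i
      rw [Pi.star_apply]
      by_cases h : (0:ℝ) ≤ hX.eigenvalues i <;> simp [h]
    rw [hfun]
  simp only [Matrix.star_eq_conjTranspose, Matrix.conjTranspose_mul,
    Matrix.conjTranspose_conjTranspose, hD, Matrix.mul_assoc]

lemma posProj_idem {X : Matrix m m ℂ} (hX : X.IsHermitian) :
    posProj X * posProj X = posProj X := by
  have hWW : star (hX.eigenvectorUnitary : Matrix m m ℂ) * (hX.eigenvectorUnitary : Matrix m m ℂ)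
      = 1 := Matrix.mem_unitaryGroup_iff'.mp hX.eigenvectorUnitary.2
  have hii : (fun i => (if (0:ℝ) ≤ hX.eigenvalues i then (1:ℂ) else 0) *
      (if (0:ℝ) ≤ hX.eigenvalues i then (1:ℂ) else 0)) =
      (fun i => if (0:ℝ) ≤ hX.eigenvalues i then (1:ℂ) else 0) := by
    funext i
    by_cases h : (0:ℝ) ≤ hX.eigenvalues i <;> simp [h]
  rw [posProj, dif_pos hX, sandwich_mul hWW, Matrix.diagonal_mul_diagonal, hii]

lemma re_sum_ite {f : m → ℝ} (p : m → Prop) [DecidablePred p] :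
    (∑ i, if p i then (f i : ℂ) else 0).re = ∑ i, if p i then f i else 0 := by
  rw [Complex.re_sum]
  refine Finset.sum_congr rfl fun i _ => ?_
  by_cases h : p i <;> simp [h]

lemma trace_mul_le_posProj {X : Matrix m m ℂ} (hX : X.IsHermitian) (T : Matrix m m ℂ)
    (hT : T.PosSemidef) (hT1 : ((1 : Matrix m m ℂ) - T).PosSemidef) :
    ((T * X).trace).re ≤ ((posProj X * X).trace).re := by
  rw [posProj_mul_trace hX, re_sum_ite]
  set W : Matrix m m ℂ := (hX.eigenvectorUnitary : Matrix m m ℂ) with hWdef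
  have hWW : star W * W = 1 := Matrix.mem_unitaryGroup_iff'.mp hX.eigenvectorUnitary.2
  have hTX : (T * X).trace = ∑ i, (star W * T * W) i i * (hX.eigenvalues i : ℂ) := by
    have h2 : (T * X).trace = (T * (W * Matrix.diagonal (RCLike.ofReal ∘ hX.eigenvalues)
        * star W)).trace := congrArg (fun Y => (T * Y).trace) hX.spectral_theorem
    rw [h2, ← Matrix.mul_assoc, ← Matrix.mul_assoc, Matrix.trace_mul_cycle, Matrix.trace]
    refine Finset.sum_congr rfl fun i _ => ?_
    rw [Matrix.diag, Matrix.mul_diagonal, ← Matrix.mul_assoc]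
    rfl
  rw [hTX, Complex.re_sum]
  refine Finset.sum_le_sum fun i _ => ?_
  have hPSD : (star W * T * W).PosSemidef := by
    have := hT.conjTranspose_mul_mul_same W
    rwa [← Matrix.star_eq_conjTranspose] at this
  have ht0 : 0 ≤ ((star W * T * W) i i).re := diag_re_nonneg hPSD i
  have ht1 : ((star W * T * W) i i).re ≤ 1 := by
    have hPSD1 : (star W * ((1 : Matrix m m ℂ) - T) * W).PosSemidef := by
      have := hT1.conjTranspose_mul_mul_same W
      rwa [← Matrix.star_eq_conjTranspose] at this
    have hsub : star W * ((1 : Matrix m m ℂ) - T) * W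
        = 1 - star W * T * W := by
      rw [Matrix.mul_sub, Matrix.sub_mul, Matrix.mul_one, hWW]
    rw [hsub] at hPSD1
    have := diag_re_nonneg hPSD1 i
    rw [Matrix.sub_apply, Matrix.one_apply_eq, Complex.sub_re, Complex.one_re] at this
    linarith
  have hre : ((star W * T * W) i i * (hX.eigenvalues i : ℂ)).re
      = ((star W * T * W) i i).re * hX.eigenvalues i := by
    rw [Complex.mul_re]
    simp
  rw [hre]
  by_cases h : (0:ℝ) ≤ hX.eigenvalues i
  · rw [if_pos h]
    exact mul_le_of_le_one_left h ht1
  · rw [if_neg h]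
    push_neg at h
    nlinarith

lemma isHermitian_real_smul {B : Matrix m m ℂ} (hB : B.IsHermitian) (l : ℝ) :
    ((l:ℂ) • B).IsHermitian := by
  show _ = _
  rw [Matrix.conjTranspose_smul, hB.eq, RCLike.star_def, Complex.conj_ofReal]

lemma posProj_mul_trace_le {A B : Matrix m m ℂ} (hA : A.PosSemidef) (hB : B.PosSemidef)
    {l : ℝ} (hl : 0 ≤ l) :
    ((posProj (A - (l:ℂ) • B) * (A - (l:ℂ) • B)).trace).re ≤ A.trace.re := by
  set X := A - (l:ℂ) • B with hXdef
  have hX : X.IsHermitian := hA.1.sub (isHermitian_real_smul hB.1 l)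
  set P := posProj X with hPdef
  have hPH : Pᴴ = P := posProj_isHermitian hX
  have hPP : P * P = P := posProj_idem hX
  have hsplit : (P * X).trace = (P * A).trace - (l:ℂ) * (P * B).trace := by
    rw [hXdef, Matrix.mul_sub, Matrix.trace_sub, Matrix.mul_smul, Matrix.trace_smul]
    rfl
  have hPB : 0 ≤ ((P * B).trace).re := by
    have h1 : (P * B * P).trace = (P * B).trace := by
      rw [Matrix.trace_mul_cycle, hPP]
    rw [← h1]
    have : (P * B * P).PosSemidef := by
      have := hB.mul_mul_conjTranspose_same P
      rwa [hPH] at this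
    exact trace_re_nonneg this
  have hPA : ((P * A).trace).re ≤ A.trace.re := by
    have hQH : ((1 : Matrix m m ℂ) - P)ᴴ = 1 - P := by
      rw [Matrix.conjTranspose_sub, hPH, Matrix.conjTranspose_one]
    have hQQ : ((1 : Matrix m m ℂ) - P) * ((1 : Matrix m m ℂ) - P) = 1 - P := by
      simp only [Matrix.mul_sub, Matrix.sub_mul, Matrix.mul_one, Matrix.one_mul, hPP]
      abel
    have hPSD : (((1 : Matrix m m ℂ) - P) * A * ((1 : Matrix m m ℂ) - P)).PosSemidef := by
      have := hA.mul_mul_conjTranspose_same ((1 : Matrix m m ℂ) - P)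
      rwa [hQH] at this
    have h2 : (((1 : Matrix m m ℂ) - P) * A * ((1 : Matrix m m ℂ) - P)).trace
        = A.trace - (P * A).trace := by
      rw [Matrix.trace_mul_cycle, hQQ, Matrix.sub_mul, Matrix.one_mul, Matrix.trace_sub]
    have h3 := trace_re_nonneg hPSD
    rw [h2, Complex.sub_re] at h3
    linarith
  have hlre : ((l:ℂ) * (P * B).trace).re = l * ((P * B).trace).re := by
    rw [Complex.mul_re]
    simp
  rw [hsplit, Complex.sub_re, hlre]
  nlinarith

end PosProjFacts

section FamR

variable {ι : Type*} [Fintype ι] [DecidableEq ι]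

noncomputable def famR (w : ι → m → ℂ) (f : ι → ℝ) : Matrix m m ℂ :=
  fam w (fun a => (f a : ℂ))

lemma fam_congr {w : ι → m → ℂ} {c c' : ι → ℂ} (h : ∀ a, c a = c' a) :
    fam w c = fam w c' := by
  unfold fam
  exact Finset.sum_congr rfl fun a _ => by rw [h]

variable {w : ι → m → ℂ}

lemma famR_mul_famR (hw : ∀ a b, dotc (w a) (w b) = if a = b then 1 else 0) (f g : ι → ℝ) :
    famR w f * famR w g = famR w (fun a => f a * g a) := by
  unfold famR
  rw [fam_mul_fam hw]
  exact fam_congr fun a => (Complex.ofReal_mul _ _).symm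

lemma famR_smul (r : ℝ) (f : ι → ℝ) :
    (r : ℂ) • famR w f = famR w (fun a => r * f a) := by
  unfold famR
  rw [fam_smul]
  exact fam_congr fun a => (Complex.ofReal_mul _ _).symm

lemma famR_sub (f g : ι → ℝ) :
    famR w f - famR w g = famR w (fun a => f a - g a) := by
  unfold famR
  rw [fam_sub]
  exact fam_congr fun a => (Complex.ofReal_sub _ _).symm

lemma famR_posSemidef (f : ι → ℝ) (hf : ∀ a, 0 ≤ f a) : (famR w f).PosSemidef :=
  fam_posSemidef f hf

lemma famR_isHermitian (f : ι → ℝ) : (famR w f).IsHermitian := fam_isHermitian f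

lemma trace_famR (hw : ∀ a b, dotc (w a) (w b) = if a = b then 1 else 0) (f : ι → ℝ) :
    (famR w f).trace = ((∑ a, f a : ℝ) : ℂ) := by
  unfold famR
  rw [trace_fam hw, Complex.ofReal_sum]

lemma trace_famR_mul (f : ι → ℝ) (N : Matrix m m ℂ) :
    ((famR w f) * N).trace = ∑ a, (f a : ℂ) * dotc (w a) (N *ᵥ w a) :=
  trace_fam_mul _ N

lemma famR_posSemidef_sub (f g : ι → ℝ) (h : ∀ a, f a ≤ g a) :
    (famR w g - famR w f).PosSemidef := by
  rw [famR_sub]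
  exact famR_posSemidef _ fun a => sub_nonneg.mpr (h a)

end FamR

section Chebyshev

lemma chebyshev {d n : ℕ} (hn : 1 ≤ n) (w Y : Fin d → ℝ) (hw : ∀ k, 0 ≤ w k)
    (hw1 : ∑ k, w k = 1) {ε : ℝ} (hε : 0 < ε) :
    1 - (∑ k, w k * (Y k - ∑ l, w l * Y l) ^ 2) / (n * ε ^ 2) ≤
      ∑ I ∈ Finset.univ.filter
        (fun I : Fin n → Fin d => |(∑ i, Y (I i)) - n * (∑ l, w l * Y l)| ≤ n * ε),
        ∏ i, w (I i) := by
  classical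
  set μ : ℝ := ∑ l, w l * Y l with hμ
  set c : Fin d → ℝ := fun k => Y k - μ with hc
  set V : ℝ := ∑ k, w k * c k ^ 2 with hV
  have hnpos : (0:ℝ) < n := by exact_mod_cast hn
  have htot : ∑ I : Fin n → Fin d, ∏ i, w (I i) = 1 := by
    rw [sum_prod_eq (fun _ t => w t)]
    simp [hw1]
  have hzero : ∑ k, w k * c k = 0 := by
    simp only [hc, mul_sub, Finset.sum_sub_distrib]
    rw [← Finset.sum_mul, hw1, one_mul, ← hμ, sub_self]
  have hcsum : ∀ I : Fin n → Fin d, ∑ i, c (I i) = (∑ i, Y (I i)) - n * μ := by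
    intro I
    simp only [hc, Finset.sum_sub_distrib, Finset.sum_const, Finset.card_univ,
      Fintype.card_fin, nsmul_eq_mul]
  have hvar : ∑ I : Fin n → Fin d, (∏ i, w (I i)) * (∑ i, c (I i)) ^ 2 = n * V := by
    have hsq : ∀ I : Fin n → Fin d,
        (∏ i, w (I i)) * (∑ i, c (I i)) ^ 2
          = ∑ a : Fin n, ∑ b : Fin n, (∏ i, w (I i)) * (c (I a) * c (I b)) := by
      intro I
      rw [sq, Finset.sum_mul_sum]
      rw [Finset.mul_sum]
      refine Finset.sum_congr rfl fun a _ => ?_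
      rw [Finset.mul_sum]
    rw [Finset.sum_congr rfl fun I (_ : I ∈ Finset.univ) => hsq I]
    rw [Finset.sum_comm]
    have hswap2 : ∀ a : Fin n, ∑ I : Fin n → Fin d, ∑ b : Fin n,
        (∏ i, w (I i)) * (c (I a) * c (I b))
        = ∑ b : Fin n, ∑ I : Fin n → Fin d, (∏ i, w (I i)) * (c (I a) * c (I b)) :=
      fun a => Finset.sum_comm
    rw [Finset.sum_congr rfl fun a (_ : a ∈ Finset.univ) => hswap2 a]
    have hab : ∀ a b : Fin n, (∑ I : Fin n → Fin d, (∏ i, w (I i)) * (c (I a) * c (I b)))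
        = if a = b then V else 0 := by
      intro a b
      by_cases habe : a = b
      · subst habe
        rw [if_pos rfl]
        have hterm : ∀ I : Fin n → Fin d, (∏ i, w (I i)) * (c (I a) * c (I a))
            = ∏ i, (w (I i) * (if i = a then c (I i) ^ 2 else 1)) := by
          intro I
          rw [Finset.prod_mul_distrib]
          congr 1
          rw [Finset.prod_ite_eq' Finset.univ a (fun i => c (I i) ^ 2)]
          simp [sq]
        rw [Finset.sum_congr rfl fun I (_ : I ∈ Finset.univ) => hterm I,
          sum_prod_eq (fun i t => w t * (if i = a then c t ^ 2 else 1))]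
        have hfac : ∀ i : Fin n, (∑ t, w t * (if i = a then c t ^ 2 else 1))
            = if i = a then V else 1 := by
          intro i
          by_cases h : i = a <;> simp [h, hw1, hV]
        rw [Finset.prod_congr rfl fun i (_ : i ∈ Finset.univ) => hfac i,
          Finset.prod_ite_eq' Finset.univ a (fun _ => V)]
        simp
      · rw [if_neg habe]
        have hterm : ∀ I : Fin n → Fin d, (∏ i, w (I i)) * (c (I a) * c (I b))
            = ∏ i, (w (I i) * ((if i = a then c (I i) else 1) * (if i = b then c (I i) else 1))) := by
          intro I
          rw [Finset.prod_mul_distrib, Finset.prod_mul_distrib,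
            Finset.prod_ite_eq' Finset.univ a (fun i => c (I i)),
            Finset.prod_ite_eq' Finset.univ b (fun i => c (I i))]
          simp
        rw [Finset.sum_congr rfl fun I (_ : I ∈ Finset.univ) => hterm I,
          sum_prod_eq (fun i t => w t * ((if i = a then c t else 1) * (if i = b then c t else 1)))]
        refine Finset.prod_eq_zero (Finset.mem_univ a) ?_
        have : ∀ t, w t * ((if a = a then c t else 1) * (if a = b then c t else 1)) = w t * c t := by
          intro t
          rw [if_pos rfl, if_neg habe, mul_one]
        rw [Finset.sum_congr rfl fun t (_ : t ∈ Finset.univ) => this t]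
        exact hzero
    rw [Finset.sum_congr rfl fun a (_ : a ∈ Finset.univ) =>
      Finset.sum_congr rfl fun b (_ : b ∈ Finset.univ) => hab a b]
    simp [Finset.sum_ite_eq, mul_comm]
  -- bad set bound
  set P : (Fin n → Fin d) → Prop := fun I => |(∑ i, Y (I i)) - n * μ| ≤ n * ε with hPdef
  have hbad : ∑ I ∈ Finset.univ.filter (fun I => ¬ P I), ∏ i, w (I i) ≤ V / (n * ε ^ 2) := by
    have hle : ∀ I ∈ Finset.univ.filter (fun I => ¬ P I),
        (∏ i, w (I i)) ≤ (∏ i, w (I i)) * (∑ i, c (I i)) ^ 2 / (n * ε) ^ 2 := by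
      intro I hI
      have hIbad : ¬ P I := (Finset.mem_filter.mp hI).2
      have hIbad2 : (n:ℝ) * ε < |(∑ i, Y (I i)) - (n:ℝ) * μ| := lt_of_not_ge hIbad
      have h1 : ((n:ℝ) * ε) ^ 2 ≤ (∑ i, c (I i)) ^ 2 := by
        rw [hcsum I]
        have h2 : |(n:ℝ) * ε| ≤ |(∑ i, Y (I i)) - n * μ| := by
          rw [abs_of_nonneg (by positivity : (0:ℝ) ≤ (n:ℝ) * ε)]
          exact le_of_lt hIbad2
        calc ((n:ℝ) * ε) ^ 2 = |(n:ℝ) * ε| ^ 2 := (sq_abs _).symm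
          _ ≤ |(∑ i, Y (I i)) - n * μ| ^ 2 := by
              exact pow_le_pow_left₀ (abs_nonneg _) h2 2
          _ = ((∑ i, Y (I i)) - n * μ) ^ 2 := sq_abs _
      have hwI : 0 ≤ ∏ i, w (I i) := Finset.prod_nonneg fun i _ => hw (I i)
      have hne : (0:ℝ) < ((n:ℝ) * ε) ^ 2 := by positivity
      have : 1 ≤ (∑ i, c (I i)) ^ 2 / ((n:ℝ) * ε) ^ 2 := (one_le_div hne).mpr h1
      calc (∏ i, w (I i)) = (∏ i, w (I i)) * 1 := (mul_one _).symm
        _ ≤ (∏ i, w (I i)) * ((∑ i, c (I i)) ^ 2 / ((n:ℝ) * ε) ^ 2) :=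
            mul_le_mul_of_nonneg_left this hwI
        _ = (∏ i, w (I i)) * (∑ i, c (I i)) ^ 2 / ((n:ℝ) * ε) ^ 2 := by ring
    calc ∑ I ∈ Finset.univ.filter (fun I => ¬ P I), ∏ i, w (I i)
        ≤ ∑ I ∈ Finset.univ.filter (fun I => ¬ P I),
            (∏ i, w (I i)) * (∑ i, c (I i)) ^ 2 / (n * ε) ^ 2 := Finset.sum_le_sum hle
      _ ≤ ∑ I : Fin n → Fin d, (∏ i, w (I i)) * (∑ i, c (I i)) ^ 2 / (n * ε) ^ 2 := by
          refine Finset.sum_le_sum_of_subset_of_nonneg (Finset.filter_subset _ _) ?_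
          intro I _ _
          have hwI : 0 ≤ ∏ i, w (I i) := Finset.prod_nonneg fun i _ => hw (I i)
          positivity
      _ = (∑ I : Fin n → Fin d, (∏ i, w (I i)) * (∑ i, c (I i)) ^ 2) / (n * ε) ^ 2 := by
          rw [Finset.sum_div]
      _ = (n * V) / (n * ε) ^ 2 := by rw [hvar]
      _ = V / (n * ε ^ 2) := by
          field_simp
  have hsplit := Finset.sum_filter_add_sum_filter_not Finset.univ P
    (fun I => ∏ i, w (I i))
  rw [htot] at hsplit
  have hgood : ∑ I ∈ Finset.univ.filter P, ∏ i, w (I i)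
      = 1 - ∑ I ∈ Finset.univ.filter (fun I => ¬ P I), ∏ i, w (I i) := by linarith
  rw [hgood]
  linarith

end Chebyshev

section Core

lemma trace_mul_proj_re_nonneg {M P : Matrix m m ℂ} (hM : M.PosSemidef)
    (hPH : Pᴴ = P) (hPP : P * P = P) : 0 ≤ ((M * P).trace).re := by
  have h1 : (P * M * P).trace = (M * P).trace := by
    rw [Matrix.trace_mul_cycle, hPP, Matrix.trace_mul_comm]
  have h2 : (P * M * P).PosSemidef := by
    have := hM.conjTranspose_mul_mul_same P
    rwa [hPH] at this
  rw [← h1]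
  exact trace_re_nonneg h2

/-- The core one-shot bound. -/
lemma core_bound {w₁ w₂ : m → m → ℂ}
    (hw₁ : ∀ a b, dotc (w₁ a) (w₁ b) = if a = b then 1 else 0)
    (hw₂ : ∀ a b, dotc (w₂ a) (w₂ b) = if a = b then 1 else 0)
    (hcomp₁ : famR w₁ (fun _ => 1) = 1)
    (hcomp₂ : famR w₂ (fun _ => 1) = 1)
    (pp qq rr : m → ℝ)
    (hpp0 : ∀ a, 0 ≤ pp a) (hqq0 : ∀ a, 0 ≤ qq a) (hrr0 : ∀ a, 0 ≤ rr a)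
    (hpp1 : ∑ a, pp a = 1)
    {A B : Matrix m m ℂ}
    (hA : A = famR w₁ pp) (hB : B = famR w₂ qq)
    (hrA : ∀ j, dotc (w₂ j) (A *ᵥ w₂ j) = ((rr j : ℝ) : ℂ))
    (S₁ S₂ : Finset m) {a b l : ℝ}
    (ha : 0 < a) (hb : 0 ≤ b) (hl : 0 ≤ l)
    (hS₁ : ∀ I ∈ S₁, a ≤ pp I)
    (hS₂ : ∀ J ∈ S₂, qq J ≤ b) :
    ((posProj (A - (l:ℂ) • B) * (A - (l:ℂ) • B)).trace).re ≤ 1 ∧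
    (∑ I ∈ S₁, pp I) - 2 * Real.sqrt (1 - ∑ J ∈ S₂, rr J) - l * b / a
      ≤ ((posProj (A - (l:ℂ) • B) * (A - (l:ℂ) • B)).trace).re := by
  classical
  have hAPSD : A.PosSemidef := hA ▸ famR_posSemidef pp hpp0
  have hBPSD : B.PosSemidef := hB ▸ famR_posSemidef qq hqq0
  have hAtr : A.trace.re = 1 := by
    rw [hA, trace_famR hw₁, hpp1]
    simp
  -- upper bound
  have hupper : ((posProj (A - (l:ℂ) • B) * (A - (l:ℂ) • B)).trace).re ≤ 1 := by
    have := posProj_mul_trace_le hAPSD hBPSD hl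
    rwa [hAtr] at this
  refine ⟨hupper, ?_⟩
  -- projectors
  set ind1 : m → ℝ := fun I => if I ∈ S₁ then 1 else 0 with hind1
  set ind2 : m → ℝ := fun J => if J ∈ S₂ then 1 else 0 with hind2
  set P₁ : Matrix m m ℂ := famR w₁ ind1 with hP₁
  set P₂ : Matrix m m ℂ := famR w₂ ind2 with hP₂
  set CC : Matrix m m ℂ := famR w₁ (fun I => Real.sqrt (pp I)) with hCdef
  have hind1_sq : ∀ I, ind1 I * ind1 I = ind1 I := by
    intro I
    by_cases h : I ∈ S₁ <;> simp [hind1, h]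
  have hind2_sq : ∀ J, ind2 J * ind2 J = ind2 J := by
    intro J
    by_cases h : J ∈ S₂ <;> simp [hind2, h]
  have hP₁idem : P₁ * P₁ = P₁ := by
    rw [hP₁, famR_mul_famR hw₁]
    exact congrArg _ (funext hind1_sq)
  have hP₂idem : P₂ * P₂ = P₂ := by
    rw [hP₂, famR_mul_famR hw₂]
    exact congrArg _ (funext hind2_sq)
  have hP₁H : P₁ᴴ = P₁ := famR_isHermitian ind1
  have hP₂H : P₂ᴴ = P₂ := famR_isHermitian ind2
  have hCH : CCᴴ = CC := famR_isHermitian _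
  have hCC : CC * CC = A := by
    rw [hCdef, famR_mul_famR hw₁, hA]
    exact congrArg _ (funext fun I => Real.mul_self_sqrt (hpp0 I))
  have hP₁PSD : P₁.PosSemidef := famR_posSemidef ind1 (fun I => by
    by_cases h : I ∈ S₁ <;> simp [hind1, h])
  have hP₂PSD : P₂.PosSemidef := famR_posSemidef ind2 (fun J => by
    by_cases h : J ∈ S₂ <;> simp [hind2, h])
  have h1P₁PSD : ((1 : Matrix m m ℂ) - P₁).PosSemidef := by
    rw [← hcomp₁, hP₁]
    exact famR_posSemidef_sub _ _ (fun I => by by_cases h : I ∈ S₁ <;> simp [hind1, h])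
  have h1P₂PSD : ((1 : Matrix m m ℂ) - P₂).PosSemidef := by
    rw [← hcomp₂, hP₂]
    exact famR_posSemidef_sub _ _ (fun J => by by_cases h : J ∈ S₂ <;> simp [hind2, h])
  set T : Matrix m m ℂ := P₂ * P₁ * P₂ with hTdef
  have hTPSD : T.PosSemidef := by
    have := hP₁PSD.conjTranspose_mul_mul_same P₂
    rwa [hP₂H] at this
  have h1TPSD : ((1 : Matrix m m ℂ) - T).PosSemidef := by
    have hid : (1 : Matrix m m ℂ) - T = ((1 : Matrix m m ℂ) - P₂) + P₂ * ((1 : Matrix m m ℂ) - P₁) * P₂ := by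
      rw [hTdef]
      simp only [Matrix.mul_sub, Matrix.sub_mul, Matrix.mul_one, Matrix.one_mul, hP₂idem]
      abel
    rw [hid]
    refine h1P₂PSD.add ?_
    have := h1P₁PSD.conjTranspose_mul_mul_same P₂
    rwa [hP₂H] at this
  set X : Matrix m m ℂ := A - (l:ℂ) • B with hXdef
  have hXH : X.IsHermitian := hAPSD.1.sub (isHermitian_real_smul hBPSD.1 l)
  have hTXle : ((T * X).trace).re ≤ ((posProj X * X).trace).re :=
    trace_mul_le_posProj hXH T hTPSD h1TPSD
  -- split
  have hsplit : ((T * X).trace).re = ((T * A).trace).re - l * ((T * B).trace).re := by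
    rw [hXdef, Matrix.mul_sub, Matrix.trace_sub, Matrix.mul_smul, Matrix.trace_smul,
      Complex.sub_re]
    congr 1
    rw [smul_eq_mul, Complex.mul_re]
    simp
  -- B part
  have hcard : (S₁.card : ℝ) * a ≤ 1 := by
    have h1 : (S₁.card : ℝ) * a = ∑ _I ∈ S₁, a := by
      rw [Finset.sum_const, nsmul_eq_mul]
    have h2 : ∑ I ∈ S₁, a ≤ ∑ I ∈ S₁, pp I := Finset.sum_le_sum hS₁
    have h3 : ∑ I ∈ S₁, pp I ≤ ∑ I, pp I :=
      Finset.sum_le_sum_of_subset_of_nonneg (Finset.subset_univ _) fun I _ _ => hpp0 I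
    rw [h1]
    rw [hpp1] at h3
    linarith
  have htraceP₁ : (P₁.trace).re = (S₁.card : ℝ) := by
    rw [hP₁, trace_famR hw₁, Complex.ofReal_re]
    rw [hind1]
    rw [Finset.sum_ite_mem]
    simp
  have hTB : ((T * B).trace).re ≤ b * S₁.card := by
    have hSig : P₂ * B * P₂ = famR w₂ (fun J => ind2 J * qq J * ind2 J) := by
      rw [hB, hP₂, famR_mul_famR hw₂, famR_mul_famR hw₂]
    have htb1 : (T * B).trace = (P₁ * (P₂ * B * P₂)).trace := by
      rw [show T * B = P₂ * (P₁ * (P₂ * B)) by rw [hTdef]; simp only [Matrix.mul_assoc],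
        Matrix.trace_mul_comm]
      simp only [Matrix.mul_assoc]
    have hdiff : ((b:ℂ) • P₂ - P₂ * B * P₂).PosSemidef := by
      rw [hSig, hP₂, famR_smul]
      refine famR_posSemidef_sub _ _ fun J => ?_
      by_cases h : J ∈ S₂
      · simp only [hind2, if_pos h, one_mul, mul_one]
        exact hS₂ J h
      · simp [hind2, if_neg h]
    have hmono : ((P₁ * (P₂ * B * P₂)).trace).re ≤ ((P₁ * ((b:ℂ) • P₂)).trace).re := by
      have hd2 : ((P₁ * ((b:ℂ) • P₂)).trace).re - ((P₁ * (P₂ * B * P₂)).trace).re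
          = ((((b:ℂ) • P₂ - P₂ * B * P₂) * P₁).trace).re := by
        rw [Matrix.sub_mul, Matrix.trace_sub, Complex.sub_re, Matrix.trace_mul_comm,
          Matrix.trace_mul_comm (P₂ * B * P₂) P₁]
      have := trace_mul_proj_re_nonneg hdiff hP₁H hP₁idem
      linarith [hd2 ▸ this]
    have hlast : ((P₁ * ((b:ℂ) • P₂)).trace).re ≤ b * S₁.card := by
      have he : (P₁ * ((b:ℂ) • P₂)).trace = (b:ℂ) * (P₁ * P₂).trace := by
        rw [Matrix.mul_smul, Matrix.trace_smul, smul_eq_mul]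
      rw [he, Complex.mul_re]
      simp only [Complex.ofReal_re, Complex.ofReal_im, zero_mul, sub_zero]
      have hP₁P₂ : ((P₁ * P₂).trace).re ≤ ((P₁).trace).re := by
        have hd3 : ((P₁).trace).re - ((P₁ * P₂).trace).re
            = ((((1 : Matrix m m ℂ) - P₂) * P₁).trace).re := by
          rw [Matrix.sub_mul, Matrix.trace_sub, Complex.sub_re, Matrix.one_mul,
            Matrix.trace_mul_comm P₁ P₂]
        have := trace_mul_proj_re_nonneg h1P₂PSD hP₁H hP₁idem
        linarith [hd3 ▸ this]
      rw [htraceP₁] at hP₁P₂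
      calc b * ((P₁ * P₂).trace).re ≤ b * (S₁.card : ℝ) :=
            mul_le_mul_of_nonneg_left hP₁P₂ hb
        _ = b * S₁.card := rfl
    rw [htb1]
    exact le_trans hmono hlast
  -- A part
  set Q : Matrix m m ℂ := (1 : Matrix m m ℂ) - P₂ with hQdef
  have hQH : Qᴴ = Q := by
    rw [hQdef, Matrix.conjTranspose_sub, hP₂H, Matrix.conjTranspose_one]
  have hQidem : Q * Q = Q := by
    rw [hQdef]
    simp only [Matrix.mul_sub, Matrix.sub_mul, Matrix.mul_one, Matrix.one_mul, hP₂idem]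
    abel
  have hdecomp : P₁ = T + Q * P₁ + P₂ * P₁ * Q := by
    rw [hTdef, hQdef]
    noncomm_ring
  have htrace_decomp : ((P₁ * A).trace).re
      = ((T * A).trace).re + ((Q * P₁ * A).trace).re + ((P₂ * P₁ * Q * A).trace).re := by
    have h := congrArg (fun M => ((M * A).trace).re) hdecomp
    simpa [Matrix.add_mul, Matrix.trace_add, Complex.add_re] using h
  have hP₁A : ((P₁ * A).trace).re = ∑ I ∈ S₁, pp I := by
    rw [hP₁, hA, famR_mul_famR hw₁, trace_famR hw₁, Complex.ofReal_re]
    rw [Finset.sum_congr rfl fun I (_ : I ∈ Finset.univ) =>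
      (by by_cases h : I ∈ S₁ <;> simp [hind1, h] :
        ind1 I * pp I = if I ∈ S₁ then pp I else 0)]
    rw [Finset.sum_ite_mem, Finset.univ_inter]
  have hS1le : ∑ I ∈ S₁, pp I ≤ 1 := by
    have h := Finset.sum_le_sum_of_subset_of_nonneg (Finset.subset_univ S₁)
      (fun I _ _ => hpp0 I)
    rwa [hpp1] at h
  have hQA : ((Q * A).trace).re = 1 - ∑ J ∈ S₂, rr J := by
    have h1 : (Q * A).trace = A.trace - (P₂ * A).trace := by
      rw [hQdef, Matrix.sub_mul, Matrix.one_mul, Matrix.trace_sub]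
    have h2 : ((P₂ * A).trace).re = ∑ J ∈ S₂, rr J := by
      rw [hP₂]
      rw [trace_famR_mul ind2 A]
      rw [Finset.sum_congr rfl fun J (_ : J ∈ Finset.univ) => by rw [hrA J]]
      have h3 : ∀ J : m, (ind2 J : ℂ) * ((rr J : ℝ) : ℂ)
          = ((if J ∈ S₂ then rr J else 0 : ℝ) : ℂ) := by
        intro J
        by_cases h : J ∈ S₂ <;> simp [hind2, h]
      rw [Finset.sum_congr rfl fun J (_ : J ∈ Finset.univ) => h3 J, ← Complex.ofReal_sum,
        Complex.ofReal_re, Finset.sum_ite_mem, Finset.univ_inter]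
    rw [h1, Complex.sub_re, hAtr, h2]
  -- Cauchy-Schwarz 1
  have habs1 : norm ((Q * P₁ * A).trace)
      ≤ Real.sqrt (((Q * A).trace).re) * Real.sqrt (((P₁ * A).trace).re) := by
    have key := abs_trace_conjTranspose_mul_le (Q * CC) (P₁ * CC)
    have hXH1 : (Q * CC)ᴴ = CC * Q := by rw [Matrix.conjTranspose_mul, hCH, hQH]
    have e1 : (Q * CC)ᴴ * (P₁ * CC) = CC * (Q * P₁ * CC) := by
      rw [hXH1]; simp only [Matrix.mul_assoc]
    have e2 : (CC * (Q * P₁ * CC)).trace = (Q * P₁ * A).trace := by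
      rw [Matrix.trace_mul_comm]
      rw [show Q * P₁ * CC * CC = Q * P₁ * A by rw [Matrix.mul_assoc (Q * P₁) CC CC, hCC]]
    have e3 : ((Q * CC)ᴴ * (Q * CC)).trace = (Q * A).trace := by
      rw [hXH1, show CC * Q * (Q * CC) = CC * (Q * Q * CC) by simp only [Matrix.mul_assoc],
        hQidem, Matrix.trace_mul_comm,
        show Q * CC * CC = Q * A by rw [Matrix.mul_assoc, hCC]]
    have e4 : ((P₁ * CC)ᴴ * (P₁ * CC)).trace = (P₁ * A).trace := by
      rw [Matrix.conjTranspose_mul, hCH, hP₁H,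
        show CC * P₁ * (P₁ * CC) = CC * (P₁ * P₁ * CC) by simp only [Matrix.mul_assoc],
        hP₁idem, Matrix.trace_mul_comm,
        show P₁ * CC * CC = P₁ * A by rw [Matrix.mul_assoc, hCC]]
    rwa [e1, e2, e3, e4] at key
  have hsqrt1 : Real.sqrt (((P₁ * A).trace).re) ≤ 1 := by
    rw [hP₁A]
    exact Real.sqrt_le_one.mpr hS1le
  have hre1 : ((Q * P₁ * A).trace).re ≤ Real.sqrt (((Q * A).trace).re) := by
    have h1 : |((Q * P₁ * A).trace).re| ≤ norm ((Q * P₁ * A).trace) :=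
      Complex.abs_re_le_norm _
    have h2 : norm ((Q * P₁ * A).trace) ≤ Real.sqrt (((Q * A).trace).re) := by
      calc norm ((Q * P₁ * A).trace)
          ≤ Real.sqrt (((Q * A).trace).re) * Real.sqrt (((P₁ * A).trace).re) := habs1
        _ ≤ Real.sqrt (((Q * A).trace).re) * 1 :=
            mul_le_mul_of_nonneg_left hsqrt1 (Real.sqrt_nonneg _)
        _ = Real.sqrt (((Q * A).trace).re) := mul_one _
    have := abs_le.mp (le_trans h1 h2)
    linarith [this.2]
  -- Cauchy-Schwarz 2
  have hCTC : ((CC * (T * CC)).trace).re ≤ 1 := by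
    have hpsd : ((CC * ((1 - T) * CC))).PosSemidef := by
      have h := h1TPSD.conjTranspose_mul_mul_same CC
      rw [hCH] at h
      rwa [show CC * (1 - T) * CC = CC * ((1 - T) * CC) by simp only [Matrix.mul_assoc]] at h
    have h0 := trace_re_nonneg hpsd
    have he : CC * ((1 - T) * CC) = CC * CC - CC * (T * CC) := by
      rw [Matrix.sub_mul, Matrix.one_mul, Matrix.mul_sub]
    rw [he, Matrix.trace_sub, Complex.sub_re, hCC, hAtr] at h0
    linarith
  have habs2 : norm ((P₂ * P₁ * Q * A).trace)
      ≤ Real.sqrt (((CC * (T * CC)).trace).re) * Real.sqrt (((Q * A).trace).re) := by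
    have key := abs_trace_conjTranspose_mul_le (P₁ * (P₂ * CC)) (Q * CC)
    have hXH2 : (P₁ * (P₂ * CC))ᴴ = CC * P₂ * P₁ := by
      rw [Matrix.conjTranspose_mul, Matrix.conjTranspose_mul, hCH, hP₂H, hP₁H,
        Matrix.mul_assoc]
    have e1 : ((P₁ * (P₂ * CC))ᴴ * (Q * CC)).trace = (P₂ * P₁ * Q * A).trace := by
      rw [hXH2, show CC * P₂ * P₁ * (Q * CC) = CC * (P₂ * P₁ * Q * CC) by
        simp only [Matrix.mul_assoc], Matrix.trace_mul_comm,
        show P₂ * P₁ * Q * CC * CC = P₂ * P₁ * Q * A by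
          rw [Matrix.mul_assoc (P₂ * P₁ * Q) CC CC, hCC]]
    have e2 : ((P₁ * (P₂ * CC))ᴴ * (P₁ * (P₂ * CC))).trace = (CC * (T * CC)).trace := by
      rw [hXH2, show CC * P₂ * P₁ * (P₁ * (P₂ * CC)) = CC * (P₂ * (P₁ * P₁) * (P₂ * CC)) by
        simp only [Matrix.mul_assoc], hP₁idem,
        show CC * (P₂ * P₁ * (P₂ * CC)) = CC * (T * CC) by
          rw [hTdef]; simp only [Matrix.mul_assoc]]
    have e3 : ((Q * CC)ᴴ * (Q * CC)).trace = (Q * A).trace := by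
      rw [show (Q * CC)ᴴ = CC * Q by rw [Matrix.conjTranspose_mul, hCH, hQH],
        show CC * Q * (Q * CC) = CC * (Q * Q * CC) by simp only [Matrix.mul_assoc],
        hQidem, Matrix.trace_mul_comm,
        show Q * CC * CC = Q * A by rw [Matrix.mul_assoc, hCC]]
    rwa [e1, e2, e3] at key
  have hre2 : ((P₂ * P₁ * Q * A).trace).re ≤ Real.sqrt (((Q * A).trace).re) := by
    have h1 : |((P₂ * P₁ * Q * A).trace).re| ≤ norm ((P₂ * P₁ * Q * A).trace) :=
      Complex.abs_re_le_norm _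
    have hs2 : Real.sqrt (((CC * (T * CC)).trace).re) ≤ 1 := Real.sqrt_le_one.mpr hCTC
    have h2 : norm ((P₂ * P₁ * Q * A).trace) ≤ Real.sqrt (((Q * A).trace).re) := by
      calc norm ((P₂ * P₁ * Q * A).trace)
          ≤ Real.sqrt (((CC * (T * CC)).trace).re) * Real.sqrt (((Q * A).trace).re) := habs2
        _ ≤ 1 * Real.sqrt (((Q * A).trace).re) :=
            mul_le_mul_of_nonneg_right hs2 (Real.sqrt_nonneg _)
        _ = Real.sqrt (((Q * A).trace).re) := one_mul _
    have := abs_le.mp (le_trans h1 h2)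
    linarith [this.2]
  -- assemble A part
  have hTA : (∑ I ∈ S₁, pp I) - 2 * Real.sqrt (1 - ∑ J ∈ S₂, rr J) ≤ ((T * A).trace).re := by
    have h := htrace_decomp
    rw [hP₁A] at h
    rw [← hQA]
    linarith [hre1, hre2]
  -- assemble B part
  have hcard' : (S₁.card : ℝ) ≤ 1 / a := by
    rw [le_div_iff₀ ha]
    exact hcard
  have hlb : l * ((T * B).trace).re ≤ l * b / a := by
    calc l * ((T * B).trace).re ≤ l * (b * S₁.card) := mul_le_mul_of_nonneg_left hTB hl
      _ = (l * b) * (S₁.card : ℝ) := by ring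
      _ ≤ (l * b) * (1 / a) := mul_le_mul_of_nonneg_left hcard' (mul_nonneg hl hb)
      _ = l * b / a := by ring
  have final : (∑ I ∈ S₁, pp I) - 2 * Real.sqrt (1 - ∑ J ∈ S₂, rr J) - l * b / a
      ≤ ((T * X).trace).re := by
    rw [hsplit]
    linarith
  exact le_trans final hTXle

end Core

section Wrapper

lemma dotc_eq_dotProduct (a b : m → ℂ) : dotc a b = dotProduct (star a) b := by
  unfold dotc dotProduct
  exact Finset.sum_congr rfl fun x _ => by rw [Pi.star_apply, RCLike.star_def]

lemma famR_tvec_one {d n : ℕ} (u : Fin d → Fin d → ℂ)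
    (hucomp : ∀ x y : Fin d, (∑ k, u k x * (starRingEnd ℂ) (u k y)) = if x = y then 1 else 0) :
    famR (tvec u n) (fun _ => (1:ℝ)) = 1 := by
  ext x y
  unfold famR fam
  rw [Matrix.sum_apply]
  have h1 : ∀ I : Fin n → Fin d, ((((1:ℝ):ℂ)) • outerM (tvec u n I) (tvec u n I)) x y
      = ∏ i, (u (I i) (x i) * (starRingEnd ℂ) (u (I i) (y i))) := by
    intro I
    rw [Matrix.smul_apply, outerM_apply]
    unfold tvec
    rw [map_prod, ← Finset.prod_mul_distrib]
    simp
  rw [Finset.sum_congr rfl fun I (_ : I ∈ Finset.univ) => h1 I,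
    sum_prod_eq (fun i t => u t (x i) * (starRingEnd ℂ) (u t (y i)))]
  rw [Finset.prod_congr rfl fun i (_ : i ∈ Finset.univ) => hucomp (x i) (y i)]
  rw [Matrix.one_apply]
  by_cases h : x = y
  · subst h
    simp
  · rw [if_neg h]
    obtain ⟨i, hi⟩ := Function.ne_iff.mp h
    exact Finset.prod_eq_zero (Finset.mem_univ i) (if_neg hi)

lemma unitary_diag_entry {d : ℕ} (U : Matrix (Fin d) (Fin d) ℂ) (f : Fin d → ℂ) (x y : Fin d) :
    (U * Matrix.diagonal f * star U) x y = ∑ k, f k * (U x k * (starRingEnd ℂ) (U y k)) := by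
  rw [Matrix.mul_apply]
  refine Finset.sum_congr rfl fun k _ => ?_
  rw [Matrix.mul_diagonal, Matrix.star_apply, RCLike.star_def]
  ring

end Wrapper

end Stein

open Stein Matrix Finset

theorem iid_spectral_divergence_rate {d : ℕ} (ϑ ς : Matrix (Fin d) (Fin d) ℂ)
    (hϑ : IsDensityOp ϑ) (hς : IsDensityOp ς)
    (hsupp : ∀ v : Fin d → ℂ, ς *ᵥ v = 0 → ϑ *ᵥ v = 0)
    (D : ℝ) (hD : D = ((ϑ * matLog ϑ).trace).re - ((ϑ * matLog ς).trace).re)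
    (δ : ℝ) (hδ : 0 < δ) :
    Filter.Tendsto (fun n : ℕ =>
      ((posProj (tensorPow ϑ n - (Real.exp (n * (D - δ)) : ℂ) • tensorPow ς n)
        * (tensorPow ϑ n - (Real.exp (n * (D - δ)) : ℂ) • tensorPow ς n)).trace).re)
      Filter.atTop (nhds 1) := by
  classical
  obtain ⟨hϑPSD, hϑtr⟩ := hϑ
  obtain ⟨hςPSD, hςtr⟩ := hς
  have hϑH : ϑ.IsHermitian := hϑPSD.1
  have hςH : ς.IsHermitian := hςPSD.1
  set p : Fin d → ℝ := hϑH.eigenvalues with hpdef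
  set q : Fin d → ℝ := hςH.eigenvalues with hqdef
  set U : Matrix (Fin d) (Fin d) ℂ := (hϑH.eigenvectorUnitary : Matrix (Fin d) (Fin d) ℂ)
    with hUdef
  set V : Matrix (Fin d) (Fin d) ℂ := (hςH.eigenvectorUnitary : Matrix (Fin d) (Fin d) ℂ)
    with hVdef
  set u : Fin d → Fin d → ℂ := fun k x => U x k with hudef
  set v : Fin d → Fin d → ℂ := fun k x => V x k with hvdef
  have hUo : star U * U = 1 := Matrix.mem_unitaryGroup_iff'.mp hϑH.eigenvectorUnitary.2
  have hUc : U * star U = 1 := Matrix.mem_unitaryGroup_iff.mp hϑH.eigenvectorUnitary.2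
  have hVo : star V * V = 1 := Matrix.mem_unitaryGroup_iff'.mp hςH.eigenvectorUnitary.2
  have hVc : V * star V = 1 := Matrix.mem_unitaryGroup_iff.mp hςH.eigenvectorUnitary.2
  have hu : ∀ k l', dotc (u k) (u l') = if k = l' then 1 else 0 := by
    intro k l'
    have h : (star U * U) k l' = (1 : Matrix (Fin d) (Fin d) ℂ) k l' := by rw [hUo]
    rw [Matrix.mul_apply, Matrix.one_apply] at h
    unfold dotc
    rw [← h]
    exact Finset.sum_congr rfl fun x _ => by rw [Matrix.star_apply, RCLike.star_def]
  have hv : ∀ k l', dotc (v k) (v l') = if k = l' then 1 else 0 := by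
    intro k l'
    have h : (star V * V) k l' = (1 : Matrix (Fin d) (Fin d) ℂ) k l' := by rw [hVo]
    rw [Matrix.mul_apply, Matrix.one_apply] at h
    unfold dotc
    rw [← h]
    exact Finset.sum_congr rfl fun x _ => by rw [Matrix.star_apply, RCLike.star_def]
  have hucomp : ∀ x y : Fin d, (∑ k, u k x * (starRingEnd ℂ) (u k y)) = if x = y then 1 else 0 := by
    intro x y
    have h : (U * star U) x y = (1 : Matrix (Fin d) (Fin d) ℂ) x y := by rw [hUc]
    rw [Matrix.mul_apply, Matrix.one_apply] at h
    rw [← h]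
    exact Finset.sum_congr rfl fun k _ => by rw [Matrix.star_apply, RCLike.star_def]
  have hvcomp : ∀ x y : Fin d, (∑ k, v k x * (starRingEnd ℂ) (v k y)) = if x = y then 1 else 0 := by
    intro x y
    have h : (V * star V) x y = (1 : Matrix (Fin d) (Fin d) ℂ) x y := by rw [hVc]
    rw [Matrix.mul_apply, Matrix.one_apply] at h
    rw [← h]
    exact Finset.sum_congr rfl fun k _ => by rw [Matrix.star_apply, RCLike.star_def]
  have hϑrep : ∀ x y, ϑ x y = ∑ k, (p k : ℂ) * (u k x * (starRingEnd ℂ) (u k y)) := by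
    intro x y
    have h0 := congrFun (congrFun hϑH.spectral_theorem x) y
    rw [h0, Unitary.conjStarAlgAut_apply, unitary_diag_entry]
    rfl
  have hςrep : ∀ x y, ς x y = ∑ k, (q k : ℂ) * (v k x * (starRingEnd ℂ) (v k y)) := by
    intro x y
    have h0 := congrFun (congrFun hςH.spectral_theorem x) y
    rw [h0, Unitary.conjStarAlgAut_apply, unitary_diag_entry]
    rfl
  have hϑfam : ϑ = famR u p := by
    ext x y
    rw [hϑrep x y]
    unfold famR fam
    rw [Matrix.sum_apply]
    exact Finset.sum_congr rfl fun k _ => by rw [Matrix.smul_apply, outerM_apply, smul_eq_mul]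
  have hςfam : ς = famR v q := by
    ext x y
    rw [hςrep x y]
    unfold famR fam
    rw [Matrix.sum_apply]
    exact Finset.sum_congr rfl fun k _ => by rw [Matrix.smul_apply, outerM_apply, smul_eq_mul]
  have hp0 : ∀ k, 0 ≤ p k := fun k => hϑPSD.eigenvalues_nonneg k
  have hq0 : ∀ k, 0 ≤ q k := fun k => hςPSD.eigenvalues_nonneg k
  have hp1 : ∑ k, p k = 1 := by
    have h := trace_famR hu p
    rw [← hϑfam, hϑtr] at h
    exact_mod_cast h.symm
  -- the measurement weights r
  have hrpos : ∀ j, 0 ≤ dotc (v j) (ϑ *ᵥ v j) := fun j => by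
    rw [dotc_eq_dotProduct]
    exact hϑPSD.dotProduct_mulVec_nonneg (v j)
  set r : Fin d → ℝ := fun j => (dotc (v j) (ϑ *ᵥ v j)).re with hrdef
  have hr : ∀ j, dotc (v j) (ϑ *ᵥ v j) = ((r j : ℝ) : ℂ) := fun j => eq_re_of_nonneg (hrpos j)
  have hr0 : ∀ j, 0 ≤ r j := fun j => (cnonneg_iff.mp (hrpos j)).1
  have hr1 : ∑ j, r j = 1 := by
    have hsum : ∑ j, dotc (v j) (ϑ *ᵥ v j) = ϑ.trace := by
      unfold dotc
      simp only [Matrix.mulVec, dotProduct, Finset.mul_sum]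
      rw [Finset.sum_comm]
      have hinner : ∀ x : Fin d, (∑ j, ∑ y, (starRingEnd ℂ) (v j x) * (ϑ x y * v j y)) = ϑ x x := by
        intro x
        rw [Finset.sum_comm]
        have h2 : ∀ y, (∑ j, (starRingEnd ℂ) (v j x) * (ϑ x y * v j y))
            = ϑ x y * ∑ j, v j y * (starRingEnd ℂ) (v j x) := by
          intro y
          rw [Finset.mul_sum]
          exact Finset.sum_congr rfl fun j _ => by ring
        rw [Finset.sum_congr rfl fun y (_ : y ∈ Finset.univ) => h2 y]
        rw [Finset.sum_congr rfl fun y (_ : y ∈ Finset.univ) => by rw [hvcomp y x]]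
        rw [Finset.sum_congr rfl fun y (_ : y ∈ Finset.univ) =>
          (by by_cases h : y = x <;> simp [h] :
            ϑ x y * (if y = x then (1:ℂ) else 0) = if y = x then ϑ x y else 0)]
        rw [Finset.sum_ite_eq' Finset.univ x (fun y => ϑ x y)]
        simp
      rw [Finset.sum_congr rfl fun x (_ : x ∈ Finset.univ) => hinner x]
      rfl
    have h2 : ((∑ j, r j : ℝ) : ℂ) = 1 := by
      rw [Complex.ofReal_sum, ← hϑtr, ← hsum]
      exact Finset.sum_congr rfl fun j _ => (hr j).symm
    exact_mod_cast h2
  -- logs and the identity D = β - Sθ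
  have hlogϑ : matLog ϑ = famR u (fun k => Real.log (p k)) := by
    rw [matLog, dif_pos hϑH]
    ext x y
    rw [unitary_diag_entry]
    unfold famR fam
    rw [Matrix.sum_apply]
    exact Finset.sum_congr rfl fun k _ => by rw [Matrix.smul_apply, outerM_apply, smul_eq_mul]
  have hlogς : matLog ς = famR v (fun k => Real.log (q k)) := by
    rw [matLog, dif_pos hςH]
    ext x y
    rw [unitary_diag_entry]
    unfold famR fam
    rw [Matrix.sum_apply]
    exact Finset.sum_congr rfl fun k _ => by rw [Matrix.smul_apply, outerM_apply, smul_eq_mul]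
  set Sθ : ℝ := -∑ k, p k * Real.log (p k) with hSθdef
  set β : ℝ := -∑ j, r j * Real.log (q j) with hβdef
  have hD1 : ((ϑ * matLog ϑ).trace).re = ∑ k, p k * Real.log (p k) := by
    rw [hlogϑ, hϑfam]
    unfold famR
    rw [fam_mul_fam hu, trace_fam hu]
    rw [Finset.sum_congr rfl fun k (_ : k ∈ Finset.univ) =>
      (Complex.ofReal_mul (p k) (Real.log (p k))).symm]
    rw [← Complex.ofReal_sum, Complex.ofReal_re]
  have hD2 : ((ϑ * matLog ς).trace).re = ∑ j, r j * Real.log (q j) := by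
    rw [hlogς, Matrix.trace_mul_comm, trace_famR_mul]
    rw [Finset.sum_congr rfl fun j (_ : j ∈ Finset.univ) => by rw [hr j]]
    rw [Finset.sum_congr rfl fun j (_ : j ∈ Finset.univ) =>
      (by push_cast; ring :
        ((Real.log (q j) : ℝ) : ℂ) * ((r j : ℝ) : ℂ) = ((r j * Real.log (q j) : ℝ) : ℂ))]
    rw [← Complex.ofReal_sum, Complex.ofReal_re]
  have hDeq : D = β - Sθ := by
    rw [hD, hD1, hD2, hSθdef, hβdef]
    ring
  set ε : ℝ := δ / 4 with hεdef
  have hεpos : 0 < ε := by rw [hεdef]; positivity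
  set C₁ : ℝ := ∑ k, p k * (-Real.log (p k) - ∑ l', p l' * -Real.log (p l')) ^ 2 with hC₁def
  set C₂ : ℝ := ∑ k, r k * (-Real.log (q k) - ∑ l', r l' * -Real.log (q l')) ^ 2 with hC₂def
  have hμ₁ : (∑ l', p l' * -Real.log (p l')) = Sθ := by
    rw [hSθdef, ← Finset.sum_neg_distrib]
    exact Finset.sum_congr rfl fun k _ => by ring
  have hμ₂ : (∑ l', r l' * -Real.log (q l')) = β := by
    rw [hβdef, ← Finset.sum_neg_distrib]
    exact Finset.sum_congr rfl fun k _ => by ring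
  -- the per-n bound
  have key : ∀ n : ℕ, 1 ≤ n →
      ((posProj (tensorPow ϑ n - (Real.exp (n * (D - δ)) : ℂ) • tensorPow ς n)
        * (tensorPow ϑ n - (Real.exp (n * (D - δ)) : ℂ) • tensorPow ς n)).trace).re ≤ 1 ∧
      1 - C₁ / (n * ε ^ 2) - 2 * Real.sqrt (C₂ / (n * ε ^ 2)) - Real.exp (-(n * (δ/2)))
        ≤ ((posProj (tensorPow ϑ n - (Real.exp (n * (D - δ)) : ℂ) • tensorPow ς n)
          * (tensorPow ϑ n - (Real.exp (n * (D - δ)) : ℂ) • tensorPow ς n)).trace).re := by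
    intro n hn
    have hnpos : (0:ℝ) < n := by exact_mod_cast hn
    set S₁ : Finset (Fin n → Fin d) :=
      Finset.univ.filter (fun I => Real.exp (-(n*(Sθ+ε))) ≤ ∏ i, p (I i)) with hS₁def
    set S₂ : Finset (Fin n → Fin d) :=
      Finset.univ.filter (fun J => (∏ i, q (J i)) ≤ Real.exp (-(n*(β-ε)))) with hS₂def
    have core := core_bound (m := Fin n → Fin d)
      (w₁ := tvec u n) (w₂ := tvec v n)
      (fun I J => tvec_orthonormal hu I J) (fun I J => tvec_orthonormal hv I J)
      (famR_tvec_one u hucomp) (famR_tvec_one v hvcomp)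
      (fun I => ∏ i, p (I i)) (fun J => ∏ i, q (J i)) (fun J => ∏ i, r (J i))
      (fun I => Finset.prod_nonneg fun i _ => hp0 (I i))
      (fun J => Finset.prod_nonneg fun i _ => hq0 (J i))
      (fun J => Finset.prod_nonneg fun i _ => hr0 (J i))
      (by rw [sum_prod_eq (fun (_ : Fin n) t => p t)]; simp [hp1])
      (A := tensorPow ϑ n) (B := tensorPow ς n)
      (tensorPow_eq_fam ϑ u p hϑrep)
      (tensorPow_eq_fam ς v q hςrep)
      (fun J => by
        rw [dotc_tvec_tensorPow, Finset.prod_congr rfl fun i (_ : i ∈ Finset.univ) => hr (J i),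
          ← Complex.ofReal_prod])
      S₁ S₂
      (a := Real.exp (-(n*(Sθ+ε)))) (b := Real.exp (-(n*(β-ε))))
      (l := Real.exp (n * (D - δ)))
      (Real.exp_pos _) (le_of_lt (Real.exp_pos _)) (le_of_lt (Real.exp_pos _))
      (fun I hI => (Finset.mem_filter.mp hI).2)
      (fun J hJ => (Finset.mem_filter.mp hJ).2)
    have cheb1 := chebyshev hn p (fun k => -Real.log (p k)) hp0 hp1 hεpos
    have cheb2 := chebyshev hn r (fun k => -Real.log (q k)) hr0 hr1 hεpos
    -- good set 1 vs S₁
    have hgood1 : (∑ I ∈ Finset.univ.filter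
          (fun I : Fin n → Fin d =>
            |(∑ i, -Real.log (p (I i))) - n * (∑ l', p l' * -Real.log (p l'))| ≤ n * ε),
          ∏ i, p (I i))
        ≤ ∑ I ∈ S₁, ∏ i, p (I i) := by
      have hstep : ∀ I ∈ Finset.univ.filter
          (fun I : Fin n → Fin d =>
            |(∑ i, -Real.log (p (I i))) - n * (∑ l', p l' * -Real.log (p l'))| ≤ n * ε),
          (∏ i, p (I i)) ≤ if I ∈ S₁ then ∏ i, p (I i) else 0 := by
        intro I hI
        by_cases hz : (∏ i, p (I i)) = 0
        · rw [hz]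
          by_cases h : I ∈ S₁ <;> simp [h]
        · have hpos : ∀ i, 0 < p (I i) := by
            intro i
            rcases lt_or_eq_of_le (hp0 (I i)) with h | h
            · exact h
            · exact absurd (Finset.prod_eq_zero (Finset.mem_univ i) h.symm) hz
          have hmem : I ∈ S₁ := by
            rw [hS₁def, Finset.mem_filter]
            refine ⟨Finset.mem_univ _, ?_⟩
            have hexp : ∏ i, p (I i) = Real.exp (∑ i, Real.log (p (I i))) := by
              rw [Real.exp_sum]
              exact Finset.prod_congr rfl fun i _ => (Real.exp_log (hpos i)).symm
            rw [hexp]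
            apply Real.exp_le_exp.mpr
            have hIb := (Finset.mem_filter.mp hI).2
            rw [hμ₁] at hIb
            have h1 := (abs_le.mp hIb).2
            have hs : (∑ i, -Real.log (p (I i))) = -∑ i, Real.log (p (I i)) := by
              rw [← Finset.sum_neg_distrib]
            rw [hs] at h1
            linarith
          rw [if_pos hmem]
      calc (∑ I ∈ Finset.univ.filter
            (fun I : Fin n → Fin d =>
              |(∑ i, -Real.log (p (I i))) - n * (∑ l', p l' * -Real.log (p l'))| ≤ n * ε),
            ∏ i, p (I i))
          ≤ ∑ I ∈ Finset.univ.filter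
            (fun I : Fin n → Fin d =>
              |(∑ i, -Real.log (p (I i))) - n * (∑ l', p l' * -Real.log (p l'))| ≤ n * ε),
            (if I ∈ S₁ then ∏ i, p (I i) else 0) := Finset.sum_le_sum hstep
        _ ≤ ∑ I : Fin n → Fin d, (if I ∈ S₁ then ∏ i, p (I i) else 0) := by
            refine Finset.sum_le_sum_of_subset_of_nonneg (Finset.filter_subset _ _) ?_
            intro I _ _
            by_cases h : I ∈ S₁
            · rw [if_pos h]
              exact Finset.prod_nonneg fun i _ => hp0 (I i)
            · rw [if_neg h]
        _ = ∑ I ∈ S₁, ∏ i, p (I i) := by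
            rw [Finset.sum_ite_mem, Finset.univ_inter]
    -- good set 2 vs S₂
    have hgood2 : Finset.univ.filter
        (fun J : Fin n → Fin d =>
          |(∑ i, -Real.log (q (J i))) - n * (∑ l', r l' * -Real.log (q l'))| ≤ n * ε) ⊆ S₂ := by
      intro J hJ
      rw [hS₂def, Finset.mem_filter]
      refine ⟨Finset.mem_univ _, ?_⟩
      by_cases hz : ∃ i, q (J i) = 0
      · obtain ⟨i, hi⟩ := hz
        rw [Finset.prod_eq_zero (Finset.mem_univ i) hi]
        exact le_of_lt (Real.exp_pos _)
      · push_neg at hz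
        have hpos : ∀ i, 0 < q (J i) := fun i => lt_of_le_of_ne (hq0 (J i)) (Ne.symm (hz i))
        have hexp : ∏ i, q (J i) = Real.exp (∑ i, Real.log (q (J i))) := by
          rw [Real.exp_sum]
          exact Finset.prod_congr rfl fun i _ => (Real.exp_log (hpos i)).symm
        rw [hexp]
        apply Real.exp_le_exp.mpr
        have hJb := (Finset.mem_filter.mp hJ).2
        rw [hμ₂] at hJb
        have h1 := (abs_le.mp hJb).1
        have hs : (∑ i, -Real.log (q (J i))) = -∑ i, Real.log (q (J i)) := by
          rw [← Finset.sum_neg_distrib]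
        rw [hs] at h1
        linarith
    have hA1 : 1 - C₁ / (n * ε ^ 2) ≤ ∑ I ∈ S₁, ∏ i, p (I i) := by
      refine le_trans ?_ hgood1
      rw [hC₁def]
      exact cheb1
    have hA2 : 1 - C₂ / (n * ε ^ 2) ≤ ∑ J ∈ S₂, ∏ i, r (J i) := by
      refine le_trans ?_ (Finset.sum_le_sum_of_subset_of_nonneg hgood2
        (fun J _ _ => Finset.prod_nonneg fun i _ => hr0 (J i)))
      rw [hC₂def]
      exact cheb2
    have hlba : Real.exp (n * (D - δ)) * Real.exp (-(n*(β-ε))) / Real.exp (-(n*(Sθ+ε)))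
        = Real.exp (-(n * (δ/2))) := by
      rw [← Real.exp_add, ← Real.exp_sub]
      congr 1
      rw [hDeq, hεdef]
      ring
    refine ⟨core.1, ?_⟩
    have hb2 : Real.sqrt (1 - ∑ J ∈ S₂, ∏ i, r (J i)) ≤ Real.sqrt (C₂ / (n * ε ^ 2)) :=
      Real.sqrt_le_sqrt (by linarith)
    have hlow := core.2
    rw [hlba] at hlow
    have hfin : 1 - C₁ / (n * ε ^ 2) - 2 * Real.sqrt (C₂ / (n * ε ^ 2))
        - Real.exp (-(n * (δ/2)))
        ≤ (∑ I ∈ S₁, ∏ i, p (I i)) - 2 * Real.sqrt (1 - ∑ J ∈ S₂, ∏ i, r (J i))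
          - Real.exp (-(n * (δ/2))) := by
      linarith
    exact le_trans hfin hlow
  -- limits
  have h1 : Filter.Tendsto (fun n : ℕ => C₁ / (n * ε ^ 2)) Filter.atTop (nhds 0) := by
    have heq : (fun n : ℕ => C₁ / (n * ε ^ 2)) = fun n : ℕ => (C₁ / ε ^ 2) / n := by
      funext n
      rw [div_div, mul_comm]
    rw [heq]
    exact tendsto_const_div_atTop_nhds_zero_nat _
  have h2' : Filter.Tendsto (fun n : ℕ => C₂ / (n * ε ^ 2)) Filter.atTop (nhds 0) := by
    have heq : (fun n : ℕ => C₂ / (n * ε ^ 2)) = fun n : ℕ => (C₂ / ε ^ 2) / n := by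
      funext n
      rw [div_div, mul_comm]
    rw [heq]
    exact tendsto_const_div_atTop_nhds_zero_nat _
  have h2 : Filter.Tendsto (fun n : ℕ => Real.sqrt (C₂ / (n * ε ^ 2))) Filter.atTop (nhds 0) := by
    have := (Real.continuous_sqrt.tendsto 0).comp h2'
    simpa [Function.comp_def] using this
  have h3 : Filter.Tendsto (fun n : ℕ => Real.exp (-(n * (δ/2)))) Filter.atTop (nhds 0) := by
    have heq : (fun n : ℕ => Real.exp (-(n * (δ/2)))) = fun n : ℕ => (Real.exp (-(δ/2))) ^ n := by
      funext n
      rw [← Real.exp_nat_mul]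
      congr 1
      ring
    rw [heq]
    refine tendsto_pow_atTop_nhds_zero_of_lt_one (le_of_lt (Real.exp_pos _)) ?_
    rw [Real.exp_lt_one_iff]
    linarith
  have hlowlim : Filter.Tendsto
      (fun n : ℕ => 1 - C₁ / (n * ε ^ 2) - 2 * Real.sqrt (C₂ / (n * ε ^ 2))
        - Real.exp (-(n * (δ/2)))) Filter.atTop (nhds 1) := by
    have hc : Filter.Tendsto (fun _ : ℕ => (1:ℝ)) Filter.atTop (nhds 1) := tendsto_const_nhds
    have hh := ((hc.sub h1).sub (h2.const_mul 2)).sub h3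
    simpa using hh
  refine tendsto_of_tendsto_of_tendsto_of_le_of_le' hlowlim tendsto_const_nhds ?_ ?_
  · filter_upwards [Filter.eventually_ge_atTop 1] with n hn
    exact (key n hn).2
  · filter_upwards [Filter.eventually_ge_atTop 1] with n hn
    exact (key n hn).1
end
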